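/- arXiv:1112.5314 — 7 statements merged into one kernel-verified Lean document; each statement's English description precedes it below -/
import Mathlib

section
/- Noncoherent case of Theorem 1: Let σ > 0. For x ∈ ℂ let P_x = 𝒩_ℂ(0, |x|² + σ²). Then sup over ξ ∈ ℂ \ {0} and Borel sets D ⊆ ℝ² of d(P_ξ(D) ‖ P_0(D)) / |ξ|² < 1/σ², with strict inequality. In particular, quantizing the output of the noncoherent Rayleigh-fading channel with any one-bit quantizer strictly reduces the capacity per unit-energy below the unquantized value 1/σ². -/
open MeasureTheory ProbabilityTheory Complex
open scoped ENNReal NNReal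

/-- Circularly symmetric complex Gaussian measure `𝒩_ℂ(m, v)` on `ℂ ≅ ℝ²`:
the product of two real Gaussians with means `Re m`, `Im m` and variance `v/2` each. -/
noncomputable def cgauss (m : ℂ) (v : ℝ) : Measure ℂ :=
  Measure.map Complex.measurableEquivRealProd.symm
    ((gaussianReal m.re (v / 2).toNNReal).prod (gaussianReal m.im (v / 2).toNNReal))

/-- Binary relative entropy `d(p‖q)`, i.e. the Kullback–Leibler divergence between
`Bernoulli(p)` and `Bernoulli(q)`, with the conventions `0·log 0 = 0` and
`d(p‖q) = +∞` if `q ∈ {0,1}` and `p ≠ q`. -/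
noncomputable def bre (p q : ℝ) : ℝ≥0∞ :=
  if (q = 0 ∨ q = 1) ∧ p ≠ q then ⊤
  else ENNReal.ofReal (p * Real.log (p / q) + (1 - p) * Real.log ((1 - p) / (1 - q)))

/-! The law `𝒩_ℂ(0, v)` has a density depending only on `t = |z|²`, and for `a ≤ b` the
likelihood ratio `dP_b/dP_a` is increasing in `t`. By the Neyman–Pearson lemma, among sets of
`P_a`-mass `y` the set `{t > -a log y}` has the largest `P_b`-mass, and since
`P_v {t > s} = exp (-s/v)` this gives `P_b(D) ≤ P_a(D) ^ (a/b)`, for `D` and its complement alike.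
With `β = σ²/(|ξ|² + σ²)` these two inequalities bound each term of `d(p‖q)` by `1/β - 1` times
the corresponding term of the binary entropy `h(p) ≤ log 2`, so
`d(p‖q) / |ξ|² ≤ log 2 / σ² < 1 / σ²`. -/

open Set Real

lemma image_sq_Ioi_zero : (fun x : ℝ => x ^ 2) '' Ioi 0 = Ioi 0 := by
  ext u
  constructor
  · rintro ⟨x, hx, rfl⟩; exact pow_pos (mem_Ioi.1 hx) 2
  · intro hu; exact ⟨√u, Real.sqrt_pos.2 hu, Real.sq_sqrt (le_of_lt hu)⟩

lemma lintegral_Ioi_comp_sq (g : ℝ → ℝ≥0∞) :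
    ∫⁻ ρ in Ioi 0, ENNReal.ofReal (2 * ρ) * g (ρ ^ 2) = ∫⁻ u in Ioi 0, g u := by
  conv_rhs => rw [← image_sq_Ioi_zero]
  refine (lintegral_image_eq_lintegral_deriv_mul_of_monotoneOn measurableSet_Ioi
    (fun x _ => ?_) (fun x hx y _ hxy => pow_le_pow_left₀ (le_of_lt hx) hxy 2) g).symm
  simpa using (hasDerivAt_pow 2 x).hasDerivWithinAt

lemma lintegral_comp_sq_add_sq {g : ℝ → ℝ≥0∞} (hg : Measurable g) :
    ∫⁻ p : ℝ × ℝ, g (p.1 ^ 2 + p.2 ^ 2) = ENNReal.ofReal π * ∫⁻ u in Ioi 0, g u := by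
  have hrad : ∀ q : ℝ × ℝ, (polarCoord.symm q).1 ^ 2 + (polarCoord.symm q).2 ^ 2 = q.1 ^ 2 := by
    intro q
    simp only [polarCoord_symm_apply]
    linear_combination q.1 ^ 2 * Real.sin_sq_add_cos_sq q.2
  rw [← lintegral_comp_polarCoord_symm, polarCoord_target, Measure.volume_eq_prod,
    ← Measure.prod_restrict]
  simp only [hrad, smul_eq_mul]
  have := lintegral_prod_mul (μ := volume.restrict (Ioi (0:ℝ))) (ν := volume.restrict (Ioo (-π) π))
    (f := fun ρ => ENNReal.ofReal ρ * g (ρ ^ 2)) (g := fun _ => 1) (by fun_prop) aemeasurable_const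
  simp only [mul_one] at this
  have h2 : ∀ ρ : ℝ, ENNReal.ofReal (2 * ρ) = 2 * ENNReal.ofReal ρ := fun ρ => by
    rw [ENNReal.ofReal_mul zero_le_two, ENNReal.ofReal_ofNat]
  rw [this, ← lintegral_Ioi_comp_sq g]
  simp only [h2, mul_assoc, lintegral_const_mul' 2 _ ENNReal.ofNat_ne_top, setLIntegral_one,
    Real.volume_Ioo, sub_neg_eq_add, ← two_mul]
  ring

-- The Neyman–Pearson lemma, for a likelihood ratio that is a monotone function of `φ`.
theorem withDensity_apply_le_of_monotone {α : Type*} [MeasurableSpace α] {μ : Measure α}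
    {φ : α → ℝ} {L : ℝ → ℝ≥0∞} (hφ : Measurable φ) (hL : Monotone L) {F : Set α}
    (hF : MeasurableSet F) {t : ℝ} (hFT : μ F = μ {x | t < φ x}) (hfin : μ F ≠ ∞) :
    μ.withDensity (L ∘ φ) F ≤ μ.withDensity (L ∘ φ) {x | t < φ x} := by
  set T := {x | t < φ x}
  have hT : MeasurableSet T := measurableSet_lt measurable_const hφ
  have hdiff : μ (F \ T) = μ (T \ F) := measure_sdiff_symm hF.nullMeasurableSet
    hT.nullMeasurableSet hFT (measure_ne_top_of_subset inter_subset_left hfin)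
  have hlow : μ.withDensity (L ∘ φ) (F \ T) ≤ μ.withDensity (L ∘ φ) (T \ F) :=
    calc μ.withDensity (L ∘ φ) (F \ T)
        ≤ ∫⁻ _ in F \ T, L t ∂μ := by
          rw [withDensity_apply _ (hF.diff hT)]
          exact setLIntegral_mono' (hF.diff hT) fun x hx => hL (not_lt.1 hx.2)
      _ = ∫⁻ _ in T \ F, L t ∂μ := by rw [setLIntegral_const, setLIntegral_const, hdiff]
      _ ≤ μ.withDensity (L ∘ φ) (T \ F) := by
          rw [withDensity_apply _ (hT.diff hF)]
          exact setLIntegral_mono' (hT.diff hF) fun x hx => hL hx.1.le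
  rw [← measure_inter_add_sdiff F hT, ← measure_inter_add_sdiff T hF, inter_comm T F]
  gcongr

lemma mul_log_div_le_of_le_rpow {x w β : ℝ} (hx : 0 ≤ x) (hw : 0 ≤ w) (hβ : 0 < β)
    (hxw : x ≤ w ^ β) : x * Real.log (x / w) ≤ (1 - β⁻¹) * (x * Real.log x) := by
  obtain rfl | hx := hx.eq_or_lt
  · simp
  have hw : 0 < w := hw.lt_of_ne <| by
    rintro rfl
    rw [Real.zero_rpow hβ.ne'] at hxw
    linarith
  have hlog : Real.log x ≤ β * Real.log w := by
    rw [← Real.log_rpow hw]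
    exact Real.log_le_log hx hxw
  have hlog' : β⁻¹ * Real.log x ≤ Real.log w := by
    rw [inv_mul_le_iff₀ hβ]; exact hlog
  rw [Real.log_div hx.ne' hw.ne', mul_comm (1 - β⁻¹), mul_assoc]
  gcongr
  linarith

theorem bre_le_of_le_rpow {p q β : ℝ} (hp0 : 0 ≤ p) (hp1 : p ≤ 1) (hq0 : 0 ≤ q) (hq1 : q ≤ 1)
    (hβ0 : 0 < β) (hβ1 : β ≤ 1) (h : p ≤ q ^ β) (h' : 1 - p ≤ (1 - q) ^ β) :
    bre p q ≤ ENNReal.ofReal ((β⁻¹ - 1) * Real.log 2) := by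
  rw [bre, if_neg]
  · refine ENNReal.ofReal_le_ofReal ?_
    have hβ : 0 ≤ β⁻¹ - 1 := sub_nonneg.2 (one_le_inv₀ hβ0 |>.2 hβ1)
    calc _ ≤ (1 - β⁻¹) * (p * Real.log p) + (1 - β⁻¹) * ((1 - p) * Real.log (1 - p)) :=
          add_le_add (mul_log_div_le_of_le_rpow hp0 hq0 hβ0 h)
            (mul_log_div_le_of_le_rpow (sub_nonneg.2 hp1) (sub_nonneg.2 hq1) hβ0 h')
      _ = (β⁻¹ - 1) * Real.binEntropy p := by
          rw [Real.binEntropy, Real.log_inv, Real.log_inv]; ring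
      _ ≤ (β⁻¹ - 1) * Real.log 2 := mul_le_mul_of_nonneg_left Real.binEntropy_le_log_two hβ
  · rintro ⟨hq | hq, hpq⟩ <;> subst hq
    · rw [Real.zero_rpow hβ0.ne'] at h
      exact hpq (le_antisymm h hp0)
    · rw [sub_self, Real.zero_rpow hβ0.ne'] at h'
      exact hpq (by linarith)

noncomputable def gaussianPlane (v : ℝ) : Measure (ℝ × ℝ) :=
  (gaussianReal 0 (v / 2).toNNReal).prod (gaussianReal 0 (v / 2).toNNReal)

-- The density of `gaussianPlane v` at a point `p` with `p.1 ^ 2 + p.2 ^ 2 = t`.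
noncomputable def gaussianPlaneDensity (v t : ℝ) : ℝ := (π * v)⁻¹ * Real.exp (-t / v)

instance (v : ℝ) : IsProbabilityMeasure (gaussianPlane v) := by
  unfold gaussianPlane; infer_instance

lemma gaussianPlaneDensity_nonneg {v : ℝ} (hv : 0 ≤ v) (t : ℝ) : 0 ≤ gaussianPlaneDensity v t := by
  unfold gaussianPlaneDensity; positivity

@[fun_prop]
lemma measurable_gaussianPlaneDensity (v : ℝ) : Measurable (gaussianPlaneDensity v) := by
  unfold gaussianPlaneDensity; fun_prop

lemma gaussianPDFReal_mul_gaussianPDFReal {v : ℝ} (hv : 0 < v) (x y : ℝ) :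
    gaussianPDFReal 0 (v / 2).toNNReal x * gaussianPDFReal 0 (v / 2).toNNReal y =
      gaussianPlaneDensity v (x ^ 2 + y ^ 2) := by
  have hπv : 0 < π * v := by positivity
  rw [gaussianPDFReal, gaussianPDFReal, Real.coe_toNNReal _ (by positivity),
    show 2 * π * (v / 2) = π * v by ring, mul_mul_mul_comm, ← mul_inv, Real.mul_self_sqrt hπv.le,
    ← Real.exp_add, gaussianPlaneDensity]
  congr 2
  field_simp
  ring

lemma gaussianPlane_eq_withDensity {v : ℝ} (hv : 0 < v) :
    gaussianPlane v =
      volume.withDensity fun p => ENNReal.ofReal (gaussianPlaneDensity v (p.1 ^ 2 + p.2 ^ 2)) := by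
  have hv2 : (v / 2).toNNReal ≠ 0 := by simpa using hv
  rw [gaussianPlane, gaussianReal_of_var_ne_zero _ hv2,
    prod_withDensity (measurable_gaussianPDF _ _) (measurable_gaussianPDF _ _),
    Measure.volume_eq_prod]
  congr 1
  funext p
  rw [gaussianPDF, gaussianPDF, ← ENNReal.ofReal_mul (gaussianPDFReal_nonneg _ _ _),
    gaussianPDFReal_mul_gaussianPDFReal hv]

lemma gaussianPlane_tail {v t : ℝ} (hv : 0 < v) (ht : 0 ≤ t) :
    gaussianPlane v {p | t < p.1 ^ 2 + p.2 ^ 2} = ENNReal.ofReal (Real.exp (-t / v)) := by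
  have hmeas : MeasurableSet {p : ℝ × ℝ | t < p.1 ^ 2 + p.2 ^ 2} :=
    measurableSet_lt measurable_const (by fun_prop)
  have hind : {p : ℝ × ℝ | t < p.1 ^ 2 + p.2 ^ 2}.indicator
      (fun p => ENNReal.ofReal (gaussianPlaneDensity v (p.1 ^ 2 + p.2 ^ 2))) =
      fun p => (Ioi t).indicator (fun u => ENNReal.ofReal (gaussianPlaneDensity v u))
        (p.1 ^ 2 + p.2 ^ 2) := by
    funext p
    by_cases h : t < p.1 ^ 2 + p.2 ^ 2 <;> simp [h]
  have hform : gaussianPlaneDensity v = fun u => (π * v)⁻¹ * Real.exp (-v⁻¹ * u) := by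
    funext u; rw [gaussianPlaneDensity, neg_mul, neg_div, div_eq_inv_mul]
  have hint : IntegrableOn (gaussianPlaneDensity v) (Ioi t) := by
    rw [hform]; exact (integrableOn_exp_mul_Ioi (neg_lt_zero.2 (inv_pos.2 hv)) t).const_mul _
  rw [gaussianPlane_eq_withDensity hv, withDensity_apply _ hmeas, ← lintegral_indicator hmeas, hind,
    lintegral_comp_sq_add_sq ((measurable_gaussianPlaneDensity v).ennreal_ofReal.indicator
      measurableSet_Ioi), setLIntegral_indicator measurableSet_Ioi, Ioi_inter_Ioi, max_eq_left ht,
    ← ofReal_integral_eq_lintegral_ofReal hint (ae_of_all _ (gaussianPlaneDensity_nonneg hv.le)),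
    ← ENNReal.ofReal_mul pi_pos.le, hform, integral_const_mul, integral_exp_mul_Ioi (neg_lt_zero.2 (inv_pos.2 hv))]
  congr 1
  field_simp

lemma gaussianPlaneDensity_eq_mul {a b : ℝ} (ha : 0 < a) (hb : 0 < b) (t : ℝ) :
    gaussianPlaneDensity b t =
      gaussianPlaneDensity a t * (a / b * Real.exp (t * (a⁻¹ - b⁻¹))) := by
  rw [gaussianPlaneDensity, gaussianPlaneDensity, mul_mul_mul_comm, ← Real.exp_add]
  have hπ := pi_pos
  congr 1
  · field_simp
  · congr 1; field_simp; ring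

lemma gaussianPlane_eq_withDensity_gaussianPlane {a b : ℝ} (ha : 0 < a) (hb : 0 < b) :
    gaussianPlane b = (gaussianPlane a).withDensity
      ((fun t => ENNReal.ofReal (a / b * Real.exp (t * (a⁻¹ - b⁻¹)))) ∘
        fun p => p.1 ^ 2 + p.2 ^ 2) := by
  rw [gaussianPlane_eq_withDensity ha, gaussianPlane_eq_withDensity hb,
    ← withDensity_mul _ (by fun_prop) (by fun_prop)]
  congr 1
  funext p
  rw [Pi.mul_apply, Function.comp_apply, ← ENNReal.ofReal_mul (gaussianPlaneDensity_nonneg ha.le _),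
    gaussianPlaneDensity_eq_mul ha hb]

theorem gaussianPlane_apply_le_rpow {a b : ℝ} (ha : 0 < a) (hab : a ≤ b) {F : Set (ℝ × ℝ)}
    (hF : MeasurableSet F) : gaussianPlane b F ≤ gaussianPlane a F ^ (a / b) := by
  have hb : 0 < b := ha.trans_le hab
  rw [gaussianPlane_eq_withDensity_gaussianPlane ha hb]
  obtain h0 | h0 := eq_or_ne (gaussianPlane a F) 0
  · rw [withDensity_absolutelyContinuous _ _ h0]
    exact zero_le
  set y := (gaussianPlane a F).toReal
  have hyF : ENNReal.ofReal y = gaussianPlane a F := ENNReal.ofReal_toReal (measure_ne_top _ _)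
  have hy : 0 < y := ENNReal.toReal_pos h0 (measure_ne_top _ _)
  have hy1 : y ≤ 1 := ENNReal.toReal_le_of_le_ofReal zero_le_one (by simpa using prob_le_one)
  have ht : 0 ≤ -a * Real.log y := by nlinarith [Real.log_nonpos hy.le hy1]
  have hexp_a : Real.exp (-(-a * Real.log y) / a) = y := by
    rw [neg_mul, neg_neg, mul_div_cancel_left₀ _ ha.ne', Real.exp_log hy]
  have hexp_b : Real.exp (-(-a * Real.log y) / b) = y ^ (a / b) := by
    rw [Real.rpow_def_of_pos hy]; congr 1; ring
  have hmono : Monotone fun t => ENNReal.ofReal (a / b * Real.exp (t * (a⁻¹ - b⁻¹))) := by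
    have hab' : 0 ≤ a⁻¹ - b⁻¹ := sub_nonneg.2 (inv_anti₀ ha hab)
    intro s t hst
    dsimp only
    gcongr
  calc _ ≤ _ := withDensity_apply_le_of_monotone (t := -a * Real.log y) (by fun_prop) hmono hF
        (by rw [gaussianPlane_tail ha ht, hexp_a, hyF]) (measure_ne_top _ _)
    _ = _ := by
      rw [← gaussianPlane_eq_withDensity_gaussianPlane ha hb, gaussianPlane_tail hb ht, hexp_b,
        ← hyF, ENNReal.ofReal_rpow_of_pos hy]

theorem gaussianPlane_real_le_rpow {a b : ℝ} (ha : 0 < a) (hab : a ≤ b) {F : Set (ℝ × ℝ)}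
    (hF : MeasurableSet F) : (gaussianPlane b).real F ≤ (gaussianPlane a).real F ^ (a / b) := by
  rw [measureReal_def, measureReal_def, ENNReal.toReal_rpow]
  exact ENNReal.toReal_mono
    (ENNReal.rpow_ne_top_of_nonneg (div_pos ha (ha.trans_le hab)).le (measure_ne_top _ _))
    (gaussianPlane_apply_le_rpow ha hab hF)

theorem bre_gaussianPlane_le {a b : ℝ} (ha : 0 < a) (hab : a ≤ b) {F : Set (ℝ × ℝ)}
    (hF : MeasurableSet F) :
    bre ((gaussianPlane b).real F) ((gaussianPlane a).real F) ≤
      ENNReal.ofReal ((b / a - 1) * Real.log 2) := by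
  have hb : 0 < b := ha.trans_le hab
  have h' := gaussianPlane_real_le_rpow ha hab hF.compl
  rw [probReal_compl_eq_one_sub hF, probReal_compl_eq_one_sub hF] at h'
  simpa only [inv_div] using bre_le_of_le_rpow measureReal_nonneg measureReal_le_one
    measureReal_nonneg measureReal_le_one (div_pos ha hb) ((div_le_one hb).2 hab)
    (gaussianPlane_real_le_rpow ha hab hF) h'

lemma cgauss_zero_apply (v : ℝ) (D : Set ℂ) :
    cgauss 0 v D = gaussianPlane v (measurableEquivRealProd.symm ⁻¹' D) := by
  rw [cgauss, MeasurableEquiv.map_apply]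
  rfl

/-- Noncoherent case of Theorem 1: quantizing the output of the noncoherent Rayleigh-fading
channel with any one-bit quantizer strictly reduces the capacity per unit-energy below the
unquantized value `1/σ²`. Here `P_x = 𝒩_ℂ(0, |x|² + σ²)` is the output law given input `x`. -/
theorem noncoherent_capacity_per_unit_energy_lt (σ : ℝ) (hσ : 0 < σ) :
    (⨆ (ξ : ℂ) (_ : ξ ≠ 0) (D : Set ℂ) (_ : MeasurableSet D),
        bre ((cgauss 0 (‖ξ‖ ^ 2 + σ ^ 2)) D).toReal
            ((cgauss 0 (σ ^ 2)) D).toReal /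
          ENNReal.ofReal (‖ξ‖ ^ 2)) <
      ENNReal.ofReal (1 / σ ^ 2) := by
  have hσ2 : 0 < σ ^ 2 := by positivity
  calc _ ≤ ENNReal.ofReal (Real.log 2 / σ ^ 2) := by
        refine iSup₂_le fun ξ hξ => iSup₂_le fun D hD => ENNReal.div_le_of_le_mul ?_
        have hs : 0 < ‖ξ‖ ^ 2 := by positivity
        rw [cgauss_zero_apply, cgauss_zero_apply, ← ENNReal.ofReal_mul (by positivity)]
        calc _ ≤ _ := bre_gaussianPlane_le hσ2 (le_add_of_nonneg_left hs.le)
              (measurableEquivRealProd.symm.measurable hD)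
          _ = _ := by congr 1; field_simp; ring
    _ < _ := by
        rw [ENNReal.ofReal_lt_ofReal_iff (by positivity)]
        gcongr
        linarith [Real.log_two_lt_d9]
end

section
/- Optimality of radial quantizers in the noncoherent case (Neyman–Pearson step): Let σ > 0 and for x ∈ ℂ let P_x = 𝒩_ℂ(0, |x|² + σ²). For every ξ ∈ ℂ \ {0} and every Borel set D ⊆ ℝ² with 0 < P_ξ(D) < 1, there exists T > 0 such that d( exp(−T²/(|ξ|² + σ²)) ‖ exp(−T²/σ²) ) ≥ d( P_ξ(D) ‖ P_0(D) ). Consequently, for every ξ ≠ 0, the supremum over Borel D of d(P_ξ(D)‖P_0(D)) equals the supremum over radial regions D = {y : |y| ≥ T}, T > 0. -/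
open MeasureTheory ProbabilityTheory Complex
open scoped ENNReal NNReal

/-!
Both hypotheses are centred circular Gaussians, so the likelihood ratio
`dP_ξ/dP_0 (y) = σ²/(|ξ|²+σ²) · exp (|y|² (1/σ² − 1/(|ξ|²+σ²)))` is a nondecreasing function of
`|y|`, and by the Neyman–Pearson lemma a tail `{|y| ≥ T}` has the largest `P_ξ`-mass among the
regions with its `P_0`-mass. Given `D` with `p = P_ξ(D)` and `q = P_0(D)`, choose `T` so that the
tail has `P_0`-mass `q` (replacing `D` by `Dᶜ` when `p < q`, as `d(p‖q) = d(1−p‖1−q)`): its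
`P_ξ`-mass is then at least `p`, and `d(·‖q)` is nondecreasing on `[q, 1)`.
-/

open Set Filter
open scoped Real Topology

theorem MeasurableEquiv.map_withDensity {α β : Type*} [MeasurableSpace α] [MeasurableSpace β]
    (e : α ≃ᵐ β) (ν : Measure α) (f : α → ℝ≥0∞) :
    (ν.withDensity f).map e = (ν.map e).withDensity (f ∘ e.symm) := by
  ext s hs
  rw [e.map_apply, withDensity_apply _ (e.measurable hs), withDensity_apply _ hs, e.restrict_map,
    lintegral_map_equiv]
  simp

instance (m : ℂ) (v : ℝ) : IsProbabilityMeasure (cgauss m v) :=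
  Measure.isProbabilityMeasure_map Complex.measurableEquivRealProd.symm.measurable.aemeasurable

noncomputable def cgaussPDFReal (v : ℝ) (y : ℂ) : ℝ := (π * v)⁻¹ * Real.exp (-‖y‖ ^ 2 / v)

noncomputable def cgaussPDF (v : ℝ) (y : ℂ) : ℝ≥0∞ := ENNReal.ofReal (cgaussPDFReal v y)

lemma cgaussPDFReal_pos {v : ℝ} (hv : 0 < v) (y : ℂ) : 0 < cgaussPDFReal v y := by
  unfold cgaussPDFReal; positivity

@[fun_prop]
lemma measurable_cgaussPDF (v : ℝ) : Measurable (cgaussPDF v) := by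
  unfold cgaussPDF cgaussPDFReal; fun_prop

lemma gaussianPDFReal_re_mul_im {v : ℝ} (hv : 0 < v) (y : ℂ) :
    gaussianPDFReal 0 (v / 2).toNNReal y.re * gaussianPDFReal 0 (v / 2).toNNReal y.im =
      cgaussPDFReal v y := by
  have hw : ((v / 2).toNNReal : ℝ) = v / 2 := Real.coe_toNNReal _ (by positivity)
  have hπv : 0 < π * v := by positivity
  simp only [gaussianPDFReal, cgaussPDFReal, hw, sub_zero, Complex.sq_norm, Complex.normSq_apply]
  rw [mul_mul_mul_comm, ← Real.exp_add, ← mul_inv, show 2 * π * (v / 2) = π * v by ring,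
    Real.mul_self_sqrt hπv.le]
  congr 2
  ring

theorem cgauss_zero_eq_withDensity {v : ℝ} (hv : 0 < v) :
    cgauss 0 v = volume.withDensity (cgaussPDF v) := by
  have hw : (v / 2).toNNReal ≠ 0 := by simpa using hv
  rw [cgauss, Complex.zero_re, Complex.zero_im, gaussianReal_of_var_ne_zero _ hw,
    prod_withDensity (measurable_gaussianPDF _ _) (measurable_gaussianPDF _ _),
    MeasurableEquiv.map_withDensity, ← Measure.volume_eq_prod,
    (Complex.volume_preserving_equiv_real_prod.symm).map_eq]
  congr 1
  funext y
  simp only [Function.comp_apply, MeasurableEquiv.symm_symm,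
    Complex.measurableEquivRealProd_apply, gaussianPDF, cgaussPDF,
    ← ENNReal.ofReal_mul (gaussianPDFReal_nonneg _ _ _), gaussianPDFReal_re_mul_im hv]

lemma integrable_cgaussPDFReal {v : ℝ} (hv : 0 < v) : Integrable (cgaussPDFReal v) := by
  have hb : 0 < ((v : ℂ)⁻¹).re := by simpa [← Complex.ofReal_inv] using hv
  have h := (GaussianFourier.integrable_cexp_neg_mul_sq_norm_add (V := ℂ) hb 0 0).norm
  refine (h.const_mul (π * v)⁻¹).congr (Eventually.of_forall fun y => ?_)
  simp only [cgaussPDFReal, Complex.norm_exp, zero_mul, add_zero]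
  congr 2
  simp only [← Complex.ofReal_inv, ← Complex.ofReal_pow, ← Complex.ofReal_mul,
    ← Complex.ofReal_neg, Complex.ofReal_re]
  ring

lemma integral_Ioi_mul_exp_neg_sq_div {v : ℝ} (hv : 0 < v) (T : ℝ) :
    ∫ r in Ioi T, r * Real.exp (-r ^ 2 / v) = v / 2 * Real.exp (-T ^ 2 / v) := by
  have hderiv : ∀ x ∈ Ici T, HasDerivAt (fun r => -(v / 2) * Real.exp (-r ^ 2 / v))
      (x * Real.exp (-x ^ 2 / v)) x := fun x _ => by
    refine (((hasDerivAt_pow 2 x).neg.div_const v).exp.const_mul (-(v / 2))).congr_deriv ?_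
    simp only [Pi.neg_apply, Nat.cast_ofNat, Nat.add_one_sub_one, pow_one]
    field_simp
  have hlim : Tendsto (fun r => -(v / 2) * Real.exp (-r ^ 2 / v)) atTop (𝓝 0) := by
    simpa using (Real.tendsto_exp_atBot.comp ((tendsto_neg_atBot_iff.2
      (tendsto_pow_atTop two_ne_zero)).atBot_div_const hv)).const_mul (-(v / 2))
  have hint : IntegrableOn (fun r => r * Real.exp (-r ^ 2 / v)) (Ioi T) :=
    (integrable_mul_exp_neg_mul_sq (inv_pos.2 hv)).integrableOn.congr_fun
      (fun r _ => by ring_nf) measurableSet_Ioi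
  rw [integral_Ioi_of_hasDerivAt_of_tendsto' hderiv hint hlim]
  ring

lemma cgauss_zero_real_norm_ge {v : ℝ} (hv : 0 < v) {T : ℝ} (hT : 0 < T) :
    (cgauss 0 v).real {y : ℂ | T ≤ ‖y‖} = Real.exp (-T ^ 2 / v) := by
  set g : ℝ → ℝ := (Ici T).indicator fun r => (π * v)⁻¹ * Real.exp (-r ^ 2 / v)
  have hA : MeasurableSet {y : ℂ | T ≤ ‖y‖} := measurableSet_le measurable_const measurable_norm
  have hg : {y : ℂ | T ≤ ‖y‖}.indicator (cgaussPDFReal v) = fun y => g ‖y‖ := by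
    ext y
    by_cases h : T ≤ ‖y‖ <;> simp [g, h, cgaussPDFReal]
  have hpolar : ∫ r in Ioi (0 : ℝ), r * g r = (π * v)⁻¹ * (v / 2 * Real.exp (-T ^ 2 / v)) := by
    have hIT : Ioi (0 : ℝ) ∩ Ici T = Ici T :=
      inter_eq_self_of_subset_right fun r hr => hT.trans_le hr
    have : (fun r => r * g r) =
        (Ici T).indicator fun r => (π * v)⁻¹ * (r * Real.exp (-r ^ 2 / v)) := by
      ext r
      by_cases h : r ∈ Ici T <;> simp [g, h]
      ring
    rw [this, setIntegral_indicator measurableSet_Ici, hIT, integral_Ici_eq_integral_Ioi,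
      integral_const_mul, integral_Ioi_mul_exp_neg_sq_div hv]
  have hpdf_nonneg (y : ℂ) : 0 ≤ cgaussPDFReal v y := (cgaussPDFReal_pos hv y).le
  rw [cgauss_zero_eq_withDensity hv, measureReal_def, withDensity_apply _ hA]
  simp only [cgaussPDF]
  rw [← ofReal_integral_eq_lintegral_ofReal (integrable_cgaussPDFReal hv).integrableOn
      (Eventually.of_forall hpdf_nonneg),
    ENNReal.toReal_ofReal (setIntegral_nonneg hA fun y _ => hpdf_nonneg y),
    ← integral_indicator hA, hg, integral_fun_norm_addHaar, Complex.finrank_real_complex,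
    measureReal_def, Complex.volume_ball]
  simp only [smul_eq_mul, Nat.add_one_sub_one, pow_one, hpolar, ENNReal.ofReal_one, one_pow,
    one_mul, ENNReal.coe_toReal, NNReal.coe_real_pi, nsmul_eq_mul, Nat.cast_ofNat]
  field_simp

theorem withDensity_apply_le_of_threshold {α : Type*} [MeasurableSpace α] {μ : Measure α}
    {f₀ f₁ : α → ℝ≥0∞} (hf₀ : Measurable f₀) (hf₁ : Measurable f₁)
    [IsFiniteMeasure (μ.withDensity f₀)] {t : ℝ≥0∞} {A D : Set α}
    (hA : MeasurableSet A) (hD : MeasurableSet D)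
    (h_in : ∀ x ∈ A, t * f₀ x ≤ f₁ x) (h_out : ∀ x ∉ A, f₁ x ≤ t * f₀ x)
    (h : μ.withDensity f₀ D ≤ μ.withDensity f₀ A) :
    μ.withDensity f₁ D ≤ μ.withDensity f₁ A := by
  set μ₀ := μ.withDensity f₀
  set μ₁ := μ.withDensity f₁
  have h_out' : μ₁ (D \ A) ≤ t * μ₀ (D \ A) := by
    rw [withDensity_apply _ (hD.diff hA), withDensity_apply _ (hD.diff hA),
      ← lintegral_const_mul _ hf₀]
    exact setLIntegral_mono (hf₀.const_mul t) fun x hx => h_out x hx.2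
  have h_in' : t * μ₀ (A \ D) ≤ μ₁ (A \ D) := by
    rw [withDensity_apply _ (hA.diff hD), withDensity_apply _ (hA.diff hD),
      ← lintegral_const_mul _ hf₀]
    exact setLIntegral_mono hf₁ fun x hx => h_in x hx.1
  have h₀ : μ₀ (D \ A) ≤ μ₀ (A \ D) := by
    rwa [← measure_inter_add_sdiff D hA, ← measure_inter_add_sdiff A hD, inter_comm,
      ENNReal.add_le_add_iff_left (measure_ne_top _ _)] at h
  rw [← measure_inter_add_sdiff D hA, ← measure_inter_add_sdiff A hD, inter_comm]
  gcongr μ₁ (A ∩ D) + ?_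
  calc μ₁ (D \ A) ≤ t * μ₀ (D \ A) := h_out'
    _ ≤ t * μ₀ (A \ D) := by gcongr
    _ ≤ μ₁ (A \ D) := h_in'

lemma cgaussPDFReal_eq_exp_mul_cgaussPDFReal {v₀ v₁ : ℝ} (hv₀ : 0 < v₀) (hv₁ : 0 < v₁) (y : ℂ) :
    cgaussPDFReal v₁ y = v₀ / v₁ * Real.exp (‖y‖ ^ 2 * (v₀⁻¹ - v₁⁻¹)) * cgaussPDFReal v₀ y := by
  simp only [cgaussPDFReal]
  rw [mul_mul_mul_comm, ← Real.exp_add]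
  congr 1
  · field_simp
  · congr 1; ring

lemma cgauss_zero_real_le_norm_ge_of_le {v₀ v₁ : ℝ} (hv₀ : 0 < v₀) (hv : v₀ ≤ v₁) {T : ℝ}
    (hT : 0 ≤ T) {D : Set ℂ} (hD : MeasurableSet D)
    (h : (cgauss 0 v₀).real D ≤ (cgauss 0 v₀).real {y : ℂ | T ≤ ‖y‖}) :
    (cgauss 0 v₁).real D ≤ (cgauss 0 v₁).real {y : ℂ | T ≤ ‖y‖} := by
  have hv₁ : 0 < v₁ := hv₀.trans_le hv
  set ratio : ℝ → ℝ := fun r => v₀ / v₁ * Real.exp (r ^ 2 * (v₀⁻¹ - v₁⁻¹))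
  have hratio {r s : ℝ} (hr : 0 ≤ r) (hrs : r ≤ s) : ratio r ≤ ratio s := by
    have : 0 ≤ v₀⁻¹ - v₁⁻¹ := sub_nonneg.2 (inv_anti₀ hv₀ hv)
    simp only [ratio]
    gcongr
  have hpdf (y : ℂ) : cgaussPDF v₁ y = ENNReal.ofReal (ratio ‖y‖) * cgaussPDF v₀ y := by
    rw [cgaussPDF, cgaussPDF, cgaussPDFReal_eq_exp_mul_cgaussPDFReal hv₀ hv₁, ← ENNReal.ofReal_mul (by positivity)]
  have hA : MeasurableSet {y : ℂ | T ≤ ‖y‖} := measurableSet_le measurable_const measurable_norm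
  rw [measureReal_def, measureReal_def,
    ENNReal.toReal_le_toReal (measure_ne_top _ _) (measure_ne_top _ _)] at h ⊢
  rw [cgauss_zero_eq_withDensity hv₀] at h
  rw [cgauss_zero_eq_withDensity hv₁]
  have : IsFiniteMeasure (volume.withDensity (cgaussPDF v₀)) := by
    rw [← cgauss_zero_eq_withDensity hv₀]; infer_instance
  refine withDensity_apply_le_of_threshold (t := ENNReal.ofReal (ratio T)) (measurable_cgaussPDF _)
    (measurable_cgaussPDF _) hA hD (fun y hy => ?_) (fun y hy => ?_) h
  · rw [hpdf]
    gcongr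
    exact hratio hT hy
  · rw [hpdf]
    gcongr
    exact hratio (norm_nonneg y) (not_le.1 hy).le

lemma bre_self (p : ℝ) : bre p p = 0 := by
  simp [bre]

lemma bre_one_sub_one_sub {p q : ℝ} (hq₀ : q ≠ 0) (hq₁ : q ≠ 1) :
    bre (1 - p) (1 - q) = bre p q := by
  have hq₁' : 1 - q ≠ 0 := sub_ne_zero.2 hq₁.symm
  have hq₀' : 1 - q ≠ 1 := by simpa using hq₀
  simp only [bre, hq₀, hq₁, hq₀', hq₁', false_or, false_and, if_false, sub_sub_cancel]
  rw [add_comm]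

lemma monotoneOn_binaryKL {q : ℝ} (hq₀ : 0 < q) (hq₁ : q < 1) :
    MonotoneOn (fun p => p * Real.log (p / q) + (1 - p) * Real.log ((1 - p) / (1 - q)))
      (Ico q 1) := by
  set g : ℝ → ℝ := fun p => -Real.binEntropy p - p * Real.log q - (1 - p) * Real.log (1 - q)
  have hg (x : ℝ) (hx₀ : x ≠ 0) (hx₁ : x ≠ 1) :
      HasDerivAt g (Real.log x - Real.log (1 - x) - Real.log q + Real.log (1 - q)) x := by
    refine ((((Real.hasDerivAt_binEntropy hx₀ hx₁).neg.sub
      ((hasDerivAt_id x).mul_const _)).sub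
      (((hasDerivAt_id x).const_sub 1).mul_const _))).congr_deriv ?_
    ring
  have hmono : MonotoneOn g (Ico q 1) := by
    refine monotoneOn_of_deriv_nonneg (convex_Ico q 1) (by fun_prop)
      (fun x hx => ?_) (fun x hx => ?_) <;> rw [interior_Ico] at hx
    · exact (hg x (hq₀.trans hx.1).ne' hx.2.ne).differentiableAt.differentiableWithinAt
    · rw [(hg x (hq₀.trans hx.1).ne' hx.2.ne).deriv]
      have h₁ : Real.log q ≤ Real.log x := Real.log_le_log hq₀ hx.1.le
      have h₂ : Real.log (1 - x) ≤ Real.log (1 - q) :=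
        Real.log_le_log (sub_pos.2 hx.2) (by linarith [hx.1])
      linarith
  refine hmono.congr fun p hp => ?_
  have hp₀ : 0 < p := hq₀.trans_le hp.1
  have hp₁ : 0 < 1 - p := sub_pos.2 hp.2
  simp only [g, Real.binEntropy, Real.log_inv, Real.log_div hp₀.ne' hq₀.ne',
    Real.log_div hp₁.ne' (sub_pos.2 hq₁).ne']
  ring

lemma bre_le_bre {p p' q : ℝ} (hq₀ : 0 < q) (hq₁ : q < 1) (hqp : q ≤ p) (hpp' : p ≤ p')
    (hp' : p' < 1) : bre p q ≤ bre p' q := by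
  simp only [bre, hq₀.ne', hq₁.ne, false_or, false_and, if_false]
  exact ENNReal.ofReal_le_ofReal <|
    monotoneOn_binaryKL hq₀ hq₁ ⟨hqp, hpp'.trans_lt hp'⟩ ⟨hqp.trans hpp', hp'⟩ hpp'

lemma cgauss_zero_absolutelyContinuous {v v' : ℝ} (hv : 0 < v) (hv' : 0 < v') :
    cgauss 0 v ≪ cgauss 0 v' := by
  rw [cgauss_zero_eq_withDensity hv, cgauss_zero_eq_withDensity hv']
  exact (withDensity_absolutelyContinuous _ _).trans <|
    withDensity_absolutelyContinuous' (measurable_cgaussPDF v').aemeasurable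
      (Eventually.of_forall fun y => (ENNReal.ofReal_pos.2 (cgaussPDFReal_pos hv' y)).ne')

lemma probReal_mem_Ioo_of_absolutelyContinuous {α : Type*} [MeasurableSpace α]
    {μ ν : Measure α} [IsProbabilityMeasure μ] [IsProbabilityMeasure ν] (hμν : μ ≪ ν)
    {s : Set α} (hs : MeasurableSet s) (h₀ : 0 < μ s) (h₁ : μ s < 1) :
    ν.real s ∈ Ioo 0 1 := by
  have hs₀ : ν s ≠ 0 := fun h => h₀.ne' (hμν h)
  have hsc₀ : ν sᶜ ≠ 0 := fun h => h₁.ne ((prob_compl_eq_zero_iff hs).1 (hμν h))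
  have hsc : 0 < ν.real sᶜ := ENNReal.toReal_pos hsc₀ (measure_ne_top _ _)
  exact ⟨ENNReal.toReal_pos hs₀ (measure_ne_top _ _),
    by linarith [probReal_compl_eq_one_sub (μ := ν) hs]⟩

lemma exists_exp_neg_sq_div_eq {v q : ℝ} (hv : 0 < v) (hq : q ∈ Ioo 0 1) :
    ∃ T : ℝ, 0 < T ∧ Real.exp (-T ^ 2 / v) = q := by
  have hlog : 0 < -v * Real.log q :=
    mul_pos_of_neg_of_neg (neg_neg_of_pos hv) (Real.log_neg hq.1 hq.2)
  refine ⟨√(-v * Real.log q), Real.sqrt_pos.2 hlog, ?_⟩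
  rw [Real.sq_sqrt hlog.le, neg_mul, neg_neg, mul_div_cancel_left₀ _ hv.ne', Real.exp_log hq.1]

lemma exists_norm_ge_bre_ge_of_le {v₀ v₁ : ℝ} (hv₀ : 0 < v₀) (hv : v₀ ≤ v₁) {D : Set ℂ}
    (hD : MeasurableSet D) (hq : (cgauss 0 v₀).real D ∈ Ioo 0 1)
    (hqp : (cgauss 0 v₀).real D ≤ (cgauss 0 v₁).real D) :
    ∃ T : ℝ, 0 < T ∧ bre ((cgauss 0 v₁).real D) ((cgauss 0 v₀).real D) ≤
      bre (Real.exp (-T ^ 2 / v₁)) (Real.exp (-T ^ 2 / v₀)) := by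
  have hv₁ : 0 < v₁ := hv₀.trans_le hv
  obtain ⟨T, hT, hTq⟩ := exists_exp_neg_sq_div_eq hv₀ hq
  have hp : (cgauss 0 v₁).real D ≤ Real.exp (-T ^ 2 / v₁) := by
    rw [← cgauss_zero_real_norm_ge hv₁ hT]
    exact cgauss_zero_real_le_norm_ge_of_le hv₀ hv hT.le hD
      (by rw [cgauss_zero_real_norm_ge hv₀ hT, hTq])
  have hp₁ : Real.exp (-T ^ 2 / v₁) < 1 :=
    Real.exp_lt_one_iff.2 (div_neg_of_neg_of_pos (by nlinarith) hv₁)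
  refine ⟨T, hT, ?_⟩
  rw [hTq]
  exact bre_le_bre hq.1 hq.2 hqp hp hp₁

lemma exists_norm_ge_bre_ge {v₀ v₁ : ℝ} (hv₀ : 0 < v₀) (hv : v₀ ≤ v₁) {D : Set ℂ}
    (hD : MeasurableSet D) (h₀ : 0 < cgauss 0 v₁ D) (h₁ : cgauss 0 v₁ D < 1) :
    ∃ T : ℝ, 0 < T ∧ bre ((cgauss 0 v₁).real D) ((cgauss 0 v₀).real D) ≤
      bre (Real.exp (-T ^ 2 / v₁)) (Real.exp (-T ^ 2 / v₀)) := by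
  have hq := probReal_mem_Ioo_of_absolutelyContinuous
    (cgauss_zero_absolutelyContinuous (hv₀.trans_le hv) hv₀) hD h₀ h₁
  rcases le_or_gt ((cgauss 0 v₀).real D) ((cgauss 0 v₁).real D) with hqp | hpq
  · exact exists_norm_ge_bre_ge_of_le hv₀ hv hD hq hqp
  · have hqc : (cgauss 0 v₀).real Dᶜ ∈ Ioo 0 1 := by
      rw [probReal_compl_eq_one_sub hD]
      exact ⟨sub_pos.2 hq.2, sub_lt_self 1 hq.1⟩
    have := exists_norm_ge_bre_ge_of_le hv₀ hv hD.compl hqc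
      (by rw [probReal_compl_eq_one_sub hD, probReal_compl_eq_one_sub hD]; linarith)
    rwa [probReal_compl_eq_one_sub hD, probReal_compl_eq_one_sub hD,
      bre_one_sub_one_sub hq.1.ne' hq.2.ne] at this

lemma iSup_bre_eq_iSup_norm_ge {v₀ v₁ : ℝ} (hv₀ : 0 < v₀) (hv : v₀ ≤ v₁) :
    ⨆ (D : Set ℂ) (_ : MeasurableSet D), bre ((cgauss 0 v₁).real D) ((cgauss 0 v₀).real D) =
      ⨆ (T : ℝ) (_ : 0 < T),
        bre ((cgauss 0 v₁).real {y : ℂ | T ≤ ‖y‖}) ((cgauss 0 v₀).real {y : ℂ | T ≤ ‖y‖}) := by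
  have hv₁ : 0 < v₁ := hv₀.trans_le hv
  have h₀₁ := cgauss_zero_absolutelyContinuous hv₀ hv₁
  refine le_antisymm (iSup₂_le fun D hD => ?_)
    (iSup₂_le fun T _ => le_iSup₂_of_le {y : ℂ | T ≤ ‖y‖}
      (measurableSet_le measurable_const measurable_norm) le_rfl)
  by_cases hdeg : cgauss 0 v₁ D = 0 ∨ cgauss 0 v₁ D = 1
  · have : (cgauss 0 v₁).real D = (cgauss 0 v₀).real D := by
      rcases hdeg with h | h
      · rw [measureReal_def, measureReal_def, h, h₀₁ h]
      · have hc := (prob_compl_eq_zero_iff hD).2 h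
        rw [measureReal_def, measureReal_def, h, (prob_compl_eq_zero_iff hD).1 (h₀₁ hc)]
    simp [this, bre_self]
  · push Not at hdeg
    obtain ⟨T, hT, hle⟩ := exists_norm_ge_bre_ge hv₀ hv hD (pos_iff_ne_zero.2 hdeg.1)
      (prob_le_one.lt_of_ne hdeg.2)
    refine le_iSup₂_of_le T hT ?_
    rwa [cgauss_zero_real_norm_ge hv₁ hT, cgauss_zero_real_norm_ge hv₀ hT]

theorem radial_quantizers_optimal_noncoherent_general (σ : ℝ) (hσ : 0 < σ) (ξ : ℂ) :
    (∀ D : Set ℂ, MeasurableSet D →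
        0 < (cgauss 0 (‖ξ‖ ^ 2 + σ ^ 2)) D →
        (cgauss 0 (‖ξ‖ ^ 2 + σ ^ 2)) D < 1 →
        ∃ T : ℝ, 0 < T ∧
          bre ((cgauss 0 (‖ξ‖ ^ 2 + σ ^ 2)) D).toReal
              ((cgauss 0 (σ ^ 2)) D).toReal ≤
            bre (Real.exp (-T ^ 2 / (‖ξ‖ ^ 2 + σ ^ 2)))
              (Real.exp (-T ^ 2 / σ ^ 2))) ∧
      (⨆ (D : Set ℂ) (_ : MeasurableSet D),
          bre ((cgauss 0 (‖ξ‖ ^ 2 + σ ^ 2)) D).toReal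
            ((cgauss 0 (σ ^ 2)) D).toReal) =
        ⨆ (T : ℝ) (_ : 0 < T),
          bre ((cgauss 0 (‖ξ‖ ^ 2 + σ ^ 2)) {y : ℂ | T ≤ ‖y‖}).toReal
            ((cgauss 0 (σ ^ 2)) {y : ℂ | T ≤ ‖y‖}).toReal := by
  have hv₀ : 0 < σ ^ 2 := by positivity
  have hv : σ ^ 2 ≤ ‖ξ‖ ^ 2 + σ ^ 2 := le_add_of_nonneg_left (sq_nonneg _)
  exact ⟨fun D hD h₀ h₁ => exists_norm_ge_bre_ge hv₀ hv hD h₀ h₁, iSup_bre_eq_iSup_norm_ge hv₀ hv⟩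

/-- Optimality of radial quantizers in the noncoherent case (Neyman–Pearson step):
every one-bit quantization region is dominated, in relative entropy, by a radial one, and
hence the supremum over all Borel regions of `d(P_ξ(D)‖P_0(D))` equals the supremum over
radial regions `{y : |y| ≥ T}`. Recall `P_x({y : |y| ≥ T}) = exp(−T²/(|x|² + σ²))`. -/
theorem radial_quantizers_optimal_noncoherent (σ : ℝ) (hσ : 0 < σ) (ξ : ℂ) (hξ : ξ ≠ 0) :
    (∀ D : Set ℂ, MeasurableSet D →
        0 < (cgauss 0 (‖ξ‖ ^ 2 + σ ^ 2)) D →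
        (cgauss 0 (‖ξ‖ ^ 2 + σ ^ 2)) D < 1 →
        ∃ T : ℝ, 0 < T ∧
          bre ((cgauss 0 (‖ξ‖ ^ 2 + σ ^ 2)) D).toReal
              ((cgauss 0 (σ ^ 2)) D).toReal ≤
            bre (Real.exp (-T ^ 2 / (‖ξ‖ ^ 2 + σ ^ 2)))
              (Real.exp (-T ^ 2 / σ ^ 2))) ∧
      (⨆ (D : Set ℂ) (_ : MeasurableSet D),
          bre ((cgauss 0 (‖ξ‖ ^ 2 + σ ^ 2)) D).toReal
            ((cgauss 0 (σ ^ 2)) D).toReal) =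
        ⨆ (T : ℝ) (_ : 0 < T),
          bre ((cgauss 0 (‖ξ‖ ^ 2 + σ ^ 2)) {y : ℂ | T ≤ ‖y‖}).toReal
            ((cgauss 0 (σ ^ 2)) {y : ℂ | T ≤ ‖y‖}).toReal :=
  radial_quantizers_optimal_noncoherent_general σ hσ ξ
end

section
/- Radial-quantizer relative-entropy bound (first form): For every σ > 0, every ξ ∈ ℂ, and every T > 0, d( exp(−T²/(|ξ|² + σ²)) ‖ exp(−T²/σ²) ) ≤ (T²/σ²)·exp(−T²/(|ξ|² + σ²)) + 1/e. -/
open MeasureTheory ProbabilityTheory Complex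
open scoped ENNReal NNReal

/-!
When `q ≤ p`, the second summand of `d(p‖q)` is nonpositive and the first is
`p log p - p log q ≤ -p log q`. For `q = exp(-T²/σ²) ≤ p = exp(-T²/(|ξ|²+σ²))` this gives
`d(p‖q) ≤ (T²/σ²) p`, and the term `1/e` is slack.
-/

lemma mul_log_div_le_mul_neg_log {p q : ℝ} (hq : 0 < q) (hp0 : 0 ≤ p) (hp1 : p ≤ 1) :
    p * Real.log (p / q) ≤ p * -Real.log q := by
  rcases hp0.eq_or_lt with rfl | hp
  · simp
  rw [Real.log_div hp.ne' hq.ne']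
  have : Real.log p ≤ 0 := Real.log_nonpos hp.le hp1
  nlinarith

lemma one_sub_mul_log_one_sub_div_nonpos {p q : ℝ} (hqp : q ≤ p) (hp1 : p ≤ 1) :
    (1 - p) * Real.log ((1 - p) / (1 - q)) ≤ 0 :=
  mul_nonpos_of_nonneg_of_nonpos (by linarith) <|
    Real.log_nonpos (div_nonneg (by linarith) (by linarith))
      (div_le_one_of_le₀ (by linarith) (by linarith))

lemma bre_le_mul_neg_log {p q : ℝ} (hq : 0 < q) (hqp : q ≤ p) (hp1 : p ≤ 1) :
    bre p q ≤ ENNReal.ofReal (p * -Real.log q) := by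
  have hfinite : ¬((q = 0 ∨ q = 1) ∧ p ≠ q) := by
    rintro ⟨rfl | rfl, hpq⟩
    · exact hq.ne rfl
    · exact hpq (le_antisymm hp1 hqp)
  rw [bre, if_neg hfinite]
  exact ENNReal.ofReal_le_ofReal <| by
    linarith [mul_log_div_le_mul_neg_log hq (hq.le.trans hqp) hp1,
      one_sub_mul_log_one_sub_div_nonpos hqp hp1]

theorem radial_bre_bound_first_general (σ : ℝ) (hσ : 0 < σ) (ξ : ℂ) (T : ℝ) :
    bre (Real.exp (-T ^ 2 / (‖ξ‖ ^ 2 + σ ^ 2))) (Real.exp (-T ^ 2 / σ ^ 2)) ≤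
      ENNReal.ofReal
        (T ^ 2 / σ ^ 2 * Real.exp (-T ^ 2 / (‖ξ‖ ^ 2 + σ ^ 2)) +
          1 / Real.exp 1) := by
  have hexp_le : Real.exp (-T ^ 2 / σ ^ 2) ≤ Real.exp (-T ^ 2 / (‖ξ‖ ^ 2 + σ ^ 2)) := by
    rw [Real.exp_le_exp, neg_div, neg_div, neg_le_neg_iff]
    exact div_le_div_of_nonneg_left (by positivity) (by positivity) (le_add_of_nonneg_left (by positivity))
  have hexp_le_one : Real.exp (-T ^ 2 / (‖ξ‖ ^ 2 + σ ^ 2)) ≤ 1 :=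
    Real.exp_le_one_iff.mpr (div_nonpos_of_nonpos_of_nonneg (neg_nonpos.mpr (sq_nonneg T)) (by positivity))
  calc _ ≤ ENNReal.ofReal (Real.exp (-T ^ 2 / (‖ξ‖ ^ 2 + σ ^ 2)) * -(-T ^ 2 / σ ^ 2)) := by
        simpa only [Real.log_exp] using bre_le_mul_neg_log (Real.exp_pos _) hexp_le hexp_le_one
    _ ≤ _ := by
        refine ENNReal.ofReal_le_ofReal ?_
        rw [neg_div', neg_neg]
        linarith [show 0 ≤ 1 / Real.exp 1 by positivity]

/-- Radial-quantizer relative-entropy bound (first form): for every `σ > 0`, `ξ ∈ ℂ` and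
threshold `T > 0`,
`d(exp(−T²/(|ξ|²+σ²)) ‖ exp(−T²/σ²)) ≤ (T²/σ²)·exp(−T²/(|ξ|²+σ²)) + 1/e`. -/
theorem radial_bre_bound_first (σ : ℝ) (hσ : 0 < σ) (ξ : ℂ) (T : ℝ) (hT : 0 < T) :
    bre (Real.exp (-T ^ 2 / (‖ξ‖ ^ 2 + σ ^ 2))) (Real.exp (-T ^ 2 / σ ^ 2)) ≤
      ENNReal.ofReal
        (T ^ 2 / σ ^ 2 * Real.exp (-T ^ 2 / (‖ξ‖ ^ 2 + σ ^ 2)) +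
          1 / Real.exp 1) :=
  radial_bre_bound_first_general σ hσ ξ T
end

section
/- Radial-quantizer relative-entropy bound (second form): For every σ > 0, every ξ ∈ ℂ, and every T > 0, d( exp(−T²/(|ξ|² + σ²)) ‖ exp(−T²/σ²) ) ≤ |ξ|²/(e·σ²) + 2/e. (The bound follows since T² · exp(−T²/(|ξ|²+σ²)) is maximized over T at T² = |ξ|² + σ².) -/
open MeasureTheory ProbabilityTheory Complex
open scoped ENNReal NNReal

/-! Write `p = exp (-x / v)` and `q = exp (-x / s)` with `x = T²`, `s = σ²`, `v = |ξ|² + σ²`.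
Since `q ≤ p ≤ 1`, the summand `(1 - p) log ((1 - p) / (1 - q))` of `d(p‖q)` is nonpositive, and
`p log (p / q) = x e^{-x/v} (1/s - 1/v)`, where `x e^{-x/v}` is maximal at `x = v` with value
`v / e`. This gives `d(p‖q) ≤ (v - s) / (e s) = |ξ|² / (e σ²)`, so the term `2/e` is slack. -/

namespace RadialQuantizer

lemma mul_exp_neg_div_le (x : ℝ) {c : ℝ} (hc : 0 < c) :
    x * Real.exp (-x / c) ≤ c / Real.exp 1 := by
  calc x * Real.exp (-x / c) = c * (x / c * Real.exp (-(x / c))) := by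
        rw [neg_div]; field_simp
    _ ≤ c * Real.exp (-1) := by gcongr; exact Real.mul_exp_neg_le_exp_neg_one _
    _ = c / Real.exp 1 := by rw [Real.exp_neg, div_eq_mul_inv]

lemma bre_le_ofReal_mul_log {p q : ℝ} (hq : 0 < q) (hqp : q ≤ p) (hp : p ≤ 1) :
    bre p q ≤ ENNReal.ofReal (p * Real.log (p / q)) := by
  have hq1 : ¬((q = 0 ∨ q = 1) ∧ p ≠ q) := by
    rintro ⟨rfl | rfl, hpq⟩
    exacts [hq.ne rfl, hpq (le_antisymm hp hqp)]
  rw [bre, if_neg hq1]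
  refine ENNReal.ofReal_le_ofReal (add_le_of_nonpos_right ?_)
  refine mul_nonpos_of_nonneg_of_nonpos (by linarith) (Real.log_nonpos ?_ ?_)
  · exact div_nonneg (by linarith) (by linarith)
  · exact div_le_one_of_le₀ (by linarith) (by linarith)

lemma bre_exp_neg_div_le {x s v : ℝ} (hx : 0 ≤ x) (hs : 0 < s) (hsv : s ≤ v) :
    bre (Real.exp (-x / v)) (Real.exp (-x / s)) ≤ ENNReal.ofReal ((v - s) / (Real.exp 1 * s)) := by
  have hv : 0 < v := hs.trans_le hsv
  have hqp : Real.exp (-x / s) ≤ Real.exp (-x / v) := by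
    refine Real.exp_le_exp.mpr ?_
    simpa only [neg_div, neg_le_neg_iff] using div_le_div_of_nonneg_left hx hs hsv
  have hp : Real.exp (-x / v) ≤ 1 :=
    Real.exp_le_one_iff.mpr (div_nonpos_of_nonpos_of_nonneg (neg_nonpos.mpr hx) hv.le)
  refine (bre_le_ofReal_mul_log (Real.exp_pos _) hqp hp).trans (ENNReal.ofReal_le_ofReal ?_)
  have hlog : Real.log (Real.exp (-x / v) / Real.exp (-x / s)) = x * (1 / s - 1 / v) := by
    rw [← Real.exp_sub, Real.log_exp]; ring
  have hgap : 0 ≤ 1 / s - 1 / v := sub_nonneg.mpr (one_div_le_one_div_of_le hs hsv)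
  calc Real.exp (-x / v) * Real.log (Real.exp (-x / v) / Real.exp (-x / s))
      = x * Real.exp (-x / v) * (1 / s - 1 / v) := by rw [hlog]; ring
    _ ≤ v / Real.exp 1 * (1 / s - 1 / v) := by gcongr; exact mul_exp_neg_div_le x hv
    _ = (v - s) / (Real.exp 1 * s) := by field_simp

end RadialQuantizer

open RadialQuantizer in
theorem radial_bre_bound_second_general (σ : ℝ) (hσ : 0 < σ) (ξ : ℂ) (T : ℝ) :
    bre (Real.exp (-T ^ 2 / (‖ξ‖ ^ 2 + σ ^ 2))) (Real.exp (-T ^ 2 / σ ^ 2)) ≤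
      ENNReal.ofReal
        (‖ξ‖ ^ 2 / (Real.exp 1 * σ ^ 2) + 2 / Real.exp 1) := by
  have h := bre_exp_neg_div_le (sq_nonneg T) (pow_pos hσ 2)
    (le_add_of_nonneg_left (sq_nonneg ‖ξ‖))
  rw [add_sub_cancel_right] at h
  exact h.trans (ENNReal.ofReal_le_ofReal (le_add_of_nonneg_right (by positivity)))

/-- Radial-quantizer relative-entropy bound (second form): for every `σ > 0`, `ξ ∈ ℂ` and
threshold `T > 0`, `d(exp(−T²/(|ξ|²+σ²)) ‖ exp(−T²/σ²)) ≤ |ξ|²/(e·σ²) + 2/e`. -/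
theorem radial_bre_bound_second (σ : ℝ) (hσ : 0 < σ) (ξ : ℂ) (T : ℝ) (hT : 0 < T) :
    bre (Real.exp (-T ^ 2 / (‖ξ‖ ^ 2 + σ ^ 2))) (Real.exp (-T ^ 2 / σ ^ 2)) ≤
      ENNReal.ofReal
        (‖ξ‖ ^ 2 / (Real.exp 1 * σ ^ 2) + 2 / Real.exp 1) :=
  radial_bre_bound_second_general σ hσ ξ T
end

section
/- Coherent lower bound on the conditional relative entropy: Let σ > 0, ξ ∈ ℂ \ {0}, let H ~ 𝒩_ℂ(0,1) and W ~ 𝒩_ℂ(0,σ²) be independent, and let T : ℂ → (0,∞) be measurable. Put p₁(h) = P(|hξ + W| ≥ T(h)) (the 𝒩_ℂ(hξ, σ²)-measure of {y : |y| ≥ T(h)}) and p₀(h) = exp(−T(h)²/σ²). Then E_H[ d(p₁(H) ‖ p₀(H)) ] ≥ E_H[ p₁(H) · T(H)²/σ² ] − log 2. -/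
open MeasureTheory ProbabilityTheory Complex
open scoped ENNReal NNReal

/-! Pointwise in `h` this is Gibbs' inequality for Bernoulli laws:
`d(p‖q) = p·(-log q) + (1-p)·(-log (1-q)) - H(p) ≥ p·(-log q) - log 2`, because the binary
entropy `H(p)` is at most `log 2`; for `q = exp(-T²/σ²)` one has `-log q = T²/σ²`. Integrating
in `h` gives the claim; if the integral on the left is not defined, its junk value `0` makes the
left side `ofReal (-log 2) = 0`. -/

instance isProbabilityMeasure_cgauss (m : ℂ) (v : ℝ) : IsProbabilityMeasure (cgauss m v) :=
  Measure.isProbabilityMeasure_map measurableEquivRealProd.symm.measurable.aemeasurable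

namespace Real

lemma mul_log_div_eq {p q : ℝ} (hq : q ≠ 0) : p * log (p / q) = p * log p - p * log q := by
  rcases eq_or_ne p 0 with rfl | hp
  · simp
  · rw [log_div hp hq]; ring

lemma mul_neg_log_sub_log_two_le {p q : ℝ} (hp1 : p ≤ 1) (hq0 : 0 < q) (hq1 : q < 1) :
    p * -log q - log 2 ≤ p * log (p / q) + (1 - p) * log ((1 - p) / (1 - q)) := by
  have hentropy : binEntropy p ≤ log 2 := binEntropy_le_log_two
  have hlog : log (1 - q) ≤ 0 := log_nonpos (by linarith) (by linarith)
  have hcross : 0 ≤ (1 - p) * -log (1 - q) := mul_nonneg (by linarith) (by linarith)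
  rw [mul_log_div_eq hq0.ne', mul_log_div_eq (by linarith : 1 - q ≠ 0)]
  rw [binEntropy, log_inv, log_inv] at hentropy
  linarith

end Real

lemma ofReal_mul_neg_log_sub_log_two_le_bre {p q : ℝ} (hp1 : p ≤ 1) (hq0 : 0 ≤ q)
    (hq1 : q ≤ 1) : ENNReal.ofReal (p * -Real.log q - Real.log 2) ≤ bre p q := by
  by_cases hq : q = 0 ∨ q = 1
  · have hlog : Real.log q = 0 := by rcases hq with rfl | rfl <;> simp
    have hlog_two : 0 ≤ Real.log 2 := Real.log_nonneg one_le_two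
    rw [hlog, neg_zero, mul_zero, zero_sub, ENNReal.ofReal_of_nonpos (neg_nonpos.mpr hlog_two)]
    exact zero_le
  · rw [bre, if_neg (fun h => hq h.1)]
    push Not at hq
    exact ENNReal.ofReal_le_ofReal <| Real.mul_neg_log_sub_log_two_le hp1
      (lt_of_le_of_ne hq0 (Ne.symm hq.1)) (lt_of_le_of_ne hq1 hq.2)

namespace MeasureTheory

variable {α : Type*} [MeasurableSpace α] {μ : Measure α}

lemma ofReal_integral_le_lintegral_ofReal (f : α → ℝ) :
    ENNReal.ofReal (∫ x, f x ∂μ) ≤ ∫⁻ x, ENNReal.ofReal (f x) ∂μ := by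
  by_cases hf : Integrable f μ
  · rw [integral_eq_lintegral_pos_part_sub_lintegral_neg_part hf]
    calc ENNReal.ofReal (_ - _) ≤ ENNReal.ofReal (∫⁻ x, ENNReal.ofReal (f x) ∂μ).toReal :=
          ENNReal.ofReal_le_ofReal (sub_le_self _ ENNReal.toReal_nonneg)
      _ ≤ _ := ENNReal.ofReal_toReal_le
  · simp [integral_undef hf]

lemma ofReal_integral_sub_le_lintegral_ofReal_sub [IsProbabilityMeasure μ] (f : α → ℝ) {c : ℝ}
    (hc : 0 ≤ c) :
    ENNReal.ofReal ((∫ x, f x ∂μ) - c) ≤ ∫⁻ x, ENNReal.ofReal (f x - c) ∂μ := by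
  by_cases hf : Integrable f μ
  · have hconst : (∫ x, f x ∂μ) - c = ∫ x, (f x - c) ∂μ := by
      simp [integral_sub hf (integrable_const c)]
    rw [hconst]
    exact ofReal_integral_le_lintegral_ofReal _
  · rw [integral_undef hf, zero_sub, ENNReal.ofReal_of_nonpos (neg_nonpos.mpr hc)]
    exact zero_le

end MeasureTheory

theorem coherent_conditional_relEnt_lower_bound_general (σ : ℝ) (ξ : ℂ) (T : ℂ → ℝ) :
    ENNReal.ofReal
        ((∫ h, ((cgauss (h * ξ) (σ ^ 2)) {y : ℂ | T h ≤ ‖y‖}).toReal *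
            (T h ^ 2 / σ ^ 2) ∂(cgauss 0 1)) - Real.log 2) ≤
      ∫⁻ h, bre ((cgauss (h * ξ) (σ ^ 2)) {y : ℂ | T h ≤ ‖y‖}).toReal
          (Real.exp (-(T h) ^ 2 / σ ^ 2)) ∂(cgauss 0 1) := by
  refine (ofReal_integral_sub_le_lintegral_ofReal_sub _ (Real.log_nonneg one_le_two)).trans
    (lintegral_mono fun h => ?_)
  have hexponent : -(T h) ^ 2 / σ ^ 2 ≤ 0 := by
    rw [neg_div]; exact neg_nonpos.mpr (by positivity)
  have hlog : T h ^ 2 / σ ^ 2 = -Real.log (Real.exp (-(T h) ^ 2 / σ ^ 2)) := by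
    rw [Real.log_exp, neg_div, neg_neg]
  rw [hlog]
  exact ofReal_mul_neg_log_sub_log_two_le_bre
    (ENNReal.toReal_le_of_le_ofReal zero_le_one (by simpa using prob_le_one))
    (Real.exp_pos _).le (Real.exp_le_one_iff.mpr hexponent)

/-- Coherent lower bound on the conditional relative entropy: for a radial quantizer with
fading-dependent threshold `T(H) > 0`,
`E_H[d(p₁(H)‖p₀(H))] ≥ E_H[p₁(H)·T(H)²/σ²] − log 2`, where
`p₁(h) = 𝒩_ℂ(hξ,σ²){y : |y| ≥ T(h)}` and `p₀(h) = exp(−T(h)²/σ²)`. -/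
theorem coherent_conditional_relEnt_lower_bound (σ : ℝ) (hσ : 0 < σ) (ξ : ℂ) (hξ : ξ ≠ 0)
    (T : ℂ → ℝ) (hTmeas : Measurable T) (hTpos : ∀ h, 0 < T h) :
    ENNReal.ofReal
        ((∫ h, ((cgauss (h * ξ) (σ ^ 2)) {y : ℂ | T h ≤ ‖y‖}).toReal *
            (T h ^ 2 / σ ^ 2) ∂(cgauss 0 1)) - Real.log 2) ≤
      ∫⁻ h, bre ((cgauss (h * ξ) (σ ^ 2)) {y : ℂ | T h ≤ ‖y‖}).toReal
          (Real.exp (-(T h) ^ 2 / σ ^ 2)) ∂(cgauss 0 1) :=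
  coherent_conditional_relEnt_lower_bound_general σ ξ T
end

section
/- Coherent achievability for each μ: Let σ > 0 and μ ∈ (0,1). Then sup over ξ ∈ ℂ \ {0} and measurable threshold functions T : ℂ → (0,∞) of (E_H[ d( P(|Hξ + W| ≥ T(H)) ‖ exp(−T(H)²/σ²) ) ]) / |ξ|² ≥ μ²/σ², where H ~ 𝒩_ℂ(0,1) and W ~ 𝒩_ℂ(0,σ²) are independent. (The choice T(h) = μ|h||ξ| with |ξ| → ∞ achieves this bound.) -/
open MeasureTheory ProbabilityTheory Complex
open scoped ENNReal NNReal

/-!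
With the threshold `T(h) = μ‖hξ‖`, the one-bit quantizer fails to fire only if the noise moves
`hξ` by at least `(1 - μ)‖hξ‖`, which by Chebyshev has probability at most
`σ² / ((1 - μ)‖hξ‖)²`. Since `d(p‖e^{-x}) ≥ p x - 2`, the divergence at fading `h` is at least
`μ²‖hξ‖²/σ² - μ²/(1 - μ)² - 2`. Averaging with `E‖H‖² = 1` and dividing by `‖ξ‖²` leaves
`μ²/σ² - O(‖ξ‖⁻²)`, and we let `‖ξ‖ → ∞`.
-/

open Real Set Filter Topology

lemma lintegral_sq_gaussianReal (w : ℝ≥0) :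
    ∫⁻ x, ENNReal.ofReal (x ^ 2) ∂gaussianReal 0 w = w := by
  have h := evariance_eq_lintegral_ofReal id (gaussianReal 0 w)
  rw [← ofReal_variance (memLp_id_gaussianReal 2), variance_id_gaussianReal] at h
  simpa [integral_id_gaussianReal] using h.symm

instance inst_s9 (m : ℂ) (v : ℝ) : IsProbabilityMeasure (cgauss m v) :=
  Measure.isProbabilityMeasure_map (MeasurableEquiv.measurable _).aemeasurable

lemma lintegral_sq_norm_cgauss_zero (v : ℝ) :
    ∫⁻ y, ENNReal.ofReal (‖y‖ ^ 2) ∂cgauss 0 v = ENNReal.ofReal v := by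
  have hsq : ∀ p : ℝ × ℝ, ENNReal.ofReal (‖measurableEquivRealProd.symm p‖ ^ 2)
      = ENNReal.ofReal (p.1 ^ 2) + ENNReal.ofReal (p.2 ^ 2) := fun p => by
    rw [← ENNReal.ofReal_add (sq_nonneg _) (sq_nonneg _), measurableEquivRealProd_symm_apply,
      Complex.sq_norm, Complex.normSq_mk, sq, sq]
  rw [cgauss, lintegral_map (by fun_prop) (MeasurableEquiv.measurable _)]
  simp only [hsq, Complex.zero_re, Complex.zero_im]
  rw [lintegral_add_left (by fun_prop), lintegral_prod _ (by fun_prop),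
    lintegral_prod _ (by fun_prop)]
  simp only [lintegral_const, measure_univ, mul_one, lintegral_sq_gaussianReal]
  rw [← ENNReal.coe_add, ← two_mul, ENNReal.ofReal, ← Real.toNNReal_ofNat,
    ← Real.toNNReal_mul zero_le_two, mul_div_cancel₀ _ two_ne_zero]

lemma cgauss_eq_map_add (m : ℂ) (v : ℝ) :
    cgauss m v = (cgauss 0 v).map (· + m) := by
  have hshift : (· + m) ∘ measurableEquivRealProd.symm
      = measurableEquivRealProd.symm ∘ Prod.map (· + m.re) (· + m.im) := by
    funext p
    apply Complex.ext <;> simp [measurableEquivRealProd_symm_apply]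
  rw [cgauss, cgauss, Measure.map_map (measurable_add_const m) (MeasurableEquiv.measurable _),
    hshift, ← Measure.map_map (MeasurableEquiv.measurable _) (by fun_prop),
    ← Measure.map_prod_map _ _ (measurable_add_const _) (measurable_add_const _),
    gaussianReal_map_add_const, gaussianReal_map_add_const, zero_re, zero_im, zero_add, zero_add]

lemma cgauss_zero_norm_ge_le (v : ℝ) {r : ℝ} (hr : 0 < r) :
    cgauss 0 v {y | r ≤ ‖y‖} ≤ ENNReal.ofReal (v / r ^ 2) := by
  have hset : {y : ℂ | r ≤ ‖y‖} = {y | ENNReal.ofReal (r ^ 2) ≤ ENNReal.ofReal (‖y‖ ^ 2)} := by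
    ext y
    rw [mem_ofPred_eq, mem_ofPred_eq, ENNReal.ofReal_le_ofReal_iff (by positivity),
      pow_le_pow_iff_left₀ hr.le (norm_nonneg _) two_ne_zero]
  rw [hset, ENNReal.ofReal_div_of_pos (by positivity), ← lintegral_sq_norm_cgauss_zero v]
  exact meas_ge_le_lintegral_div (by fun_prop) (by simp [hr.ne']) ENNReal.ofReal_ne_top

lemma cgauss_norm_lt_le (m : ℂ) (v : ℝ) {r : ℝ} (hr : r < ‖m‖) :
    cgauss m v {y | ‖y‖ < r} ≤ ENNReal.ofReal (v / (‖m‖ - r) ^ 2) := by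
  rw [cgauss_eq_map_add, Measure.map_apply (measurable_add_const m)
    (isOpen_lt continuous_norm continuous_const).measurableSet]
  refine (measure_mono fun y (hy : ‖y + m‖ < r) => ?_).trans
    (cgauss_zero_norm_ge_le v (sub_pos.mpr hr))
  have := norm_sub_norm_le m (-y)
  simp only [sub_neg_eq_add, norm_neg, add_comm m] at this
  exact (by linarith : ‖m‖ - r ≤ ‖y‖)

lemma sub_two_le_bre_exp_neg {p x : ℝ} (hp0 : 0 ≤ p) (hp1 : p ≤ 1) (hx : 0 < x) :
    ENNReal.ofReal (p * x - 2) ≤ bre p (rexp (-x)) := by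
  have hq0 : 0 < rexp (-x) := Real.exp_pos _
  have hq1 : rexp (-x) < 1 := Real.exp_lt_one_iff.mpr (by linarith)
  rw [bre, if_neg (by rintro ⟨h | h, -⟩ <;> linarith)]
  refine ENNReal.ofReal_le_ofReal ?_
  have hfirst : p * x - 1 ≤ p * Real.log (p / rexp (-x)) := by
    rcases hp0.eq_or_lt with rfl | hp
    · simp
    · rw [Real.log_div hp.ne' hq0.ne', Real.log_exp]
      nlinarith [Real.self_sub_one_le_mul_log hp0]
  have hsecond : -1 ≤ (1 - p) * Real.log ((1 - p) / (1 - rexp (-x))) := by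
    rcases hp1.eq_or_lt with rfl | hp
    · simp
    · rw [Real.log_div (by linarith) (by linarith)]
      have hlog : Real.log (1 - rexp (-x)) ≤ 0 := Real.log_nonpos (by linarith) (by linarith)
      nlinarith [Real.self_sub_one_le_mul_log (sub_nonneg.mpr hp1)]
  linarith

lemma ofReal_sub_le_bre_cgauss {v : ℝ} (hv : 0 < v) {μ : ℝ} (hμ0 : 0 < μ) (hμ1 : μ < 1)
    {m : ℂ} (hm : m ≠ 0) :
    ENNReal.ofReal (μ ^ 2 * ‖m‖ ^ 2 / v - (μ ^ 2 / (1 - μ) ^ 2 + 2)) ≤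
      bre (cgauss m v {y | μ * ‖m‖ ≤ ‖y‖}).toReal (rexp (-(μ * ‖m‖) ^ 2 / v)) := by
  set p := (cgauss m v {y | μ * ‖m‖ ≤ ‖y‖}).toReal
  set x := (μ * ‖m‖) ^ 2 / v
  have hm' : 0 < ‖m‖ := norm_pos_iff.mpr hm
  have hx : 0 < x := by positivity
  have hmiss : 1 - p ≤ v / ((1 - μ) * ‖m‖) ^ 2 := by
    have hcompl : {y : ℂ | μ * ‖m‖ ≤ ‖y‖}ᶜ = {y | ‖y‖ < μ * ‖m‖} := by ext; simp
    have hr : μ * ‖m‖ < ‖m‖ := by nlinarith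
    have := ENNReal.toReal_mono ENNReal.ofReal_ne_top (cgauss_norm_lt_le m v hr)
    rwa [← hcompl, ← measureReal_def, probReal_compl_eq_one_sub
      (isClosed_le continuous_const continuous_norm).measurableSet, ENNReal.toReal_ofReal
      (by positivity), show ‖m‖ - μ * ‖m‖ = (1 - μ) * ‖m‖ by ring] at this
  have hmiss_x : (1 - p) * x ≤ μ ^ 2 / (1 - μ) ^ 2 :=
    calc (1 - p) * x ≤ v / ((1 - μ) * ‖m‖) ^ 2 * x := by gcongr
      _ = μ ^ 2 / (1 - μ) ^ 2 := by
        have : 1 - μ ≠ 0 := by linarith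
        simp only [x]
        field_simp
  calc ENNReal.ofReal (μ ^ 2 * ‖m‖ ^ 2 / v - (μ ^ 2 / (1 - μ) ^ 2 + 2))
      ≤ ENNReal.ofReal (p * x - 2) := by
        refine ENNReal.ofReal_le_ofReal ?_
        have : μ ^ 2 * ‖m‖ ^ 2 / v = x := by ring
        linarith
    _ ≤ bre p (rexp (-(μ * ‖m‖) ^ 2 / v)) := by
        rw [neg_div]
        exact sub_two_le_bre_exp_neg ENNReal.toReal_nonneg
          (ENNReal.toReal_le_of_le_ofReal zero_le_one (by simpa using prob_le_one)) hx

-- The paper's threshold `μ‖hξ‖` vanishes at `h = 0`; any positive value will do there.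
noncomputable def radialThreshold (μ : ℝ) (ξ h : ℂ) : ℝ := if h = 0 then 1 else μ * ‖h * ξ‖

lemma measurable_radialThreshold (μ : ℝ) (ξ : ℂ) : Measurable (radialThreshold μ ξ) :=
  Measurable.ite (measurableSet_singleton 0) measurable_const (by fun_prop)

lemma radialThreshold_pos {μ : ℝ} (hμ : 0 < μ) {ξ : ℂ} (hξ : ξ ≠ 0) (h : ℂ) :
    0 < radialThreshold μ ξ h := by
  unfold radialThreshold
  split_ifs with hh
  · exact one_pos
  · exact mul_pos hμ (norm_pos_iff.mpr (mul_ne_zero hh hξ))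

lemma ofReal_sub_le_rate_radialThreshold {v : ℝ} (hv : 0 < v) {μ : ℝ} (hμ0 : 0 < μ)
    (hμ1 : μ < 1) {ξ : ℂ} (hξ : ξ ≠ 0) :
    ENNReal.ofReal (μ ^ 2 / v - (μ ^ 2 / (1 - μ) ^ 2 + 2) / ‖ξ‖ ^ 2) ≤
      (∫⁻ h, bre (cgauss (h * ξ) v {y | radialThreshold μ ξ h ≤ ‖y‖}).toReal
          (rexp (-(radialThreshold μ ξ h) ^ 2 / v)) ∂cgauss 0 1) / ENNReal.ofReal (‖ξ‖ ^ 2) := by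
  set K := μ ^ 2 / (1 - μ) ^ 2 + 2
  set a := μ ^ 2 * ‖ξ‖ ^ 2 / v
  have hK : 0 ≤ K := by positivity
  have hξ2 : 0 < ‖ξ‖ ^ 2 := by positivity
  have hpoint : ∀ h : ℂ, ENNReal.ofReal (a * ‖h‖ ^ 2) - ENNReal.ofReal K ≤
      bre (cgauss (h * ξ) v {y | radialThreshold μ ξ h ≤ ‖y‖}).toReal
        (rexp (-(radialThreshold μ ξ h) ^ 2 / v)) := by
    intro h
    rcases eq_or_ne h 0 with rfl | hh
    · simp
    · rw [radialThreshold, if_neg hh, ← ENNReal.ofReal_sub _ hK]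
      convert ofReal_sub_le_bre_cgauss hv hμ0 hμ1 (mul_ne_zero hh hξ) using 3
      rw [norm_mul]
      ring
  have hmean : ENNReal.ofReal a - ENNReal.ofReal K ≤
      ∫⁻ h, bre (cgauss (h * ξ) v {y | radialThreshold μ ξ h ≤ ‖y‖}).toReal
        (rexp (-(radialThreshold μ ξ h) ^ 2 / v)) ∂cgauss 0 1 :=
    calc ENNReal.ofReal a - ENNReal.ofReal K
        = ∫⁻ h, ENNReal.ofReal (a * ‖h‖ ^ 2) ∂cgauss 0 1 - ∫⁻ _, ENNReal.ofReal K ∂cgauss 0 1 := by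
          simp only [ENNReal.ofReal_mul (by positivity : 0 ≤ a)]
          rw [lintegral_const_mul _ (by fun_prop), lintegral_sq_norm_cgauss_zero, lintegral_const,
            measure_univ, ENNReal.ofReal_one, mul_one, mul_one]
      _ ≤ ∫⁻ h, ENNReal.ofReal (a * ‖h‖ ^ 2) - ENNReal.ofReal K ∂cgauss 0 1 :=
          lintegral_sub_le _ _ measurable_const
      _ ≤ _ := lintegral_mono hpoint
  calc ENNReal.ofReal (μ ^ 2 / v - K / ‖ξ‖ ^ 2)
      = (ENNReal.ofReal a - ENNReal.ofReal K) / ENNReal.ofReal (‖ξ‖ ^ 2) := by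
        rw [ENNReal.sub_div fun _ _ => (ENNReal.ofReal_pos.mpr hξ2).ne',
          ← ENNReal.ofReal_div_of_pos hξ2, ← ENNReal.ofReal_div_of_pos hξ2,
          ← ENNReal.ofReal_sub _ (by positivity)]
        congr 2
        simp only [a]
        field_simp
    _ ≤ _ := ENNReal.div_le_div_right hmean _

/-- Coherent achievability for each `μ ∈ (0,1)`: the best rate per unit-energy achievable
on the coherent channel with radial one-bit quantizers (fading-dependent thresholds) is at
least `μ²/σ²`; the choice `T(h) = μ|h||ξ|` with `|ξ| → ∞` achieves this bound. -/
theorem coherent_achievability_mu (σ : ℝ) (hσ : 0 < σ) (μ : ℝ) (hμ0 : 0 < μ) (hμ1 : μ < 1) :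
    ENNReal.ofReal (μ ^ 2 / σ ^ 2) ≤
      ⨆ (ξ : ℂ) (_ : ξ ≠ 0) (T : ℂ → ℝ) (_ : Measurable T ∧ ∀ h, 0 < T h),
        (∫⁻ h, bre ((cgauss (h * ξ) (σ ^ 2)) {y : ℂ | T h ≤ ‖y‖}).toReal
            (Real.exp (-(T h) ^ 2 / σ ^ 2)) ∂(cgauss 0 1)) /
          ENNReal.ofReal (‖ξ‖ ^ 2) := by
  have hdefect : Tendsto (fun ξ : ℂ => (μ ^ 2 / (1 - μ) ^ 2 + 2) / ‖ξ‖ ^ 2) (cocompact ℂ) (𝓝 0) :=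
    tendsto_const_nhds.div_atTop
      ((tendsto_pow_atTop two_ne_zero).comp tendsto_norm_cocompact_atTop)
  have hrate : Tendsto (fun ξ : ℂ => ENNReal.ofReal (μ ^ 2 / σ ^ 2 -
      (μ ^ 2 / (1 - μ) ^ 2 + 2) / ‖ξ‖ ^ 2)) (cocompact ℂ) (𝓝 (ENNReal.ofReal (μ ^ 2 / σ ^ 2))) := by
    simpa using ENNReal.tendsto_ofReal (tendsto_const_nhds.sub hdefect)
  refine le_of_tendsto hrate ?_
  filter_upwards [(isCompact_singleton (x := (0 : ℂ))).compl_mem_cocompact] with ξ hξ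
  exact (ofReal_sub_le_rate_radialThreshold (by positivity) hμ0 hμ1 hξ).trans
    (le_iSup₂_of_le ξ hξ (le_iSup₂_of_le (radialThreshold μ ξ)
      ⟨measurable_radialThreshold μ ξ, radialThreshold_pos hμ0 hξ⟩ le_rfl))
end

section
/- Theorem 2, noncoherent case, lower bound: Let σ > 0 and for x ∈ ℂ let the output Ỹ_x have Re Ỹ_x and Im Ỹ_x independent real Gaussians, each with mean 0 and variance (|x|² + σ²)/2. Then sup over ξ ∈ ℂ \ {0} and Borel sets D_R, D_I ⊆ ℝ of [ d( P(Re Ỹ_ξ ∈ D_R) ‖ P(Re Ỹ_0 ∈ D_R) ) + d( P(Im Ỹ_ξ ∈ D_I) ‖ P(Im Ỹ_0 ∈ D_I) ) ] / |ξ|² ≥ 2·Q(1)/σ², where Q(1) is the probability that a standard real Gaussian is at least 1. The bound is approached by D_R = D_I = [T, ∞) with T = (|ξ|² + σ²)/2 as |ξ| → ∞. -/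
/-!
Use the same one-bit quantizer `D = {x | t s ≤ |x|}` on both components, where `s² = σ²/2` is
the noise variance per component and `(t s)²` the output variance per component under the
input `ξ`, so that `‖ξ‖² = (t² - 1) σ²`. Under `ξ` the bit fires with probability
`p = 2 Q(1)`, under `0` with probability `q = 2 Q(t) ≤ 2 φ(t) / t` (Mills' inequality).
Since `d(p‖q) ≥ p (log (p / q) - 1)` and `Q(1) ≥ φ(2)`, we get
`log (p / q) ≥ t² / 2 + log t - 2`, so each bit carries at least `Q(1) (t² - 1)` as soon as
`log t ≥ 5/2`. Two bits divided by `‖ξ‖²` give `2 Q(1) / σ²`.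
-/

open MeasureTheory ProbabilityTheory Complex
open scoped ENNReal NNReal

open Real Set

lemma sub_le_mul_log_div {x y : ℝ} (hx : 0 ≤ x) (hy : 0 < y) : x - y ≤ x * Real.log (x / y) := by
  have h := mul_le_mul_of_nonneg_left (self_sub_one_le_mul_log (div_nonneg hx hy.le)) hy.le
  rwa [mul_sub, mul_div_cancel₀ _ hy.ne', mul_one, ← mul_assoc, mul_div_cancel₀ _ hy.ne'] at h

/- Stated through an upper bound `r` of `q` so that `q = 0` is covered: there `bre p q = ⊤`,
while `Real.log (p / q)` is a junk value. -/
lemma ofReal_mul_log_div_sub_one_le_bre {p q r : ℝ} (hp : 0 < p) (hp1 : p ≤ 1) (hq : 0 ≤ q)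
    (hqr : q ≤ r) (hr : r < 1) : ENNReal.ofReal (p * (Real.log (p / r) - 1)) ≤ bre p q := by
  rcases hq.eq_or_lt with rfl | hq
  · simp [bre, hp.ne']
  rw [bre, if_neg (by rintro ⟨h | h, -⟩ <;> linarith)]
  apply ENNReal.ofReal_le_ofReal
  have hlog : Real.log (p / r) ≤ Real.log (p / q) :=
    Real.log_le_log (div_pos hp (hq.trans_le hqr)) (div_le_div_of_nonneg_left hp.le hq hqr)
  have hsecond : q - p ≤ (1 - p) * Real.log ((1 - p) / (1 - q)) := by
    simpa using sub_le_mul_log_div (sub_nonneg.2 hp1) (sub_pos.2 (hqr.trans_lt hr))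
  nlinarith

lemma gaussianPDFReal_zero_one (x : ℝ) :
    gaussianPDFReal 0 1 x = Real.exp (-x ^ 2 / 2) / √(2 * π) := by
  simp [gaussianPDFReal, div_eq_inv_mul]

/-- Mills' bound `φ(t) / t` on the standard Gaussian tail `Q(t)`. -/
noncomputable def gaussianTailBound (t : ℝ) : ℝ := Real.exp (-t ^ 2 / 2) / (t * √(2 * π))

lemma gaussianTailBound_pos {t : ℝ} (ht : 0 < t) : 0 < gaussianTailBound t := by
  unfold gaussianTailBound
  positivity

lemma gaussianReal_Ici_toReal_le_gaussianTailBound {t : ℝ} (ht : 0 < t) :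
    (gaussianReal 0 1 (Ici t)).toReal ≤ gaussianTailBound t := by
  rw [gaussianReal_apply_eq_integral 0 one_ne_zero, ENNReal.toReal_ofReal
    (setIntegral_nonneg measurableSet_Ici fun x _ ↦ gaussianPDFReal_nonneg 0 1 x),
    integral_Ici_eq_integral_Ioi]
  calc ∫ x in Ioi t, gaussianPDFReal 0 1 x
      ≤ ∫ x in Ioi t, Real.exp (t ^ 2 / 2) / √(2 * π) * Real.exp (-t * x) := by
        refine setIntegral_mono_on (integrable_gaussianPDFReal 0 1).integrableOn
          ((integrableOn_exp_mul_Ioi (by linarith) t).const_mul _) measurableSet_Ioi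
          fun x _ ↦ ?_
        rw [gaussianPDFReal_zero_one, div_mul_eq_mul_div, ← Real.exp_add]
        gcongr
        nlinarith [sq_nonneg (x - t)]
    _ = gaussianTailBound t := by
        rw [integral_const_mul, integral_exp_mul_Ioi (by linarith), gaussianTailBound]
        field_simp
        rw [← Real.exp_add]
        ring_nf

lemma two_mul_gaussianTailBound_lt_one {t : ℝ} (ht : 1 < t) : 2 * gaussianTailBound t < 1 := by
  have hexp : Real.exp (-t ^ 2 / 2) < 1 := Real.exp_lt_one_iff.2 (by nlinarith)
  have hsqrt : 2 ≤ √(2 * π) := Real.le_sqrt_of_sq_le (by nlinarith [Real.pi_gt_three])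
  rw [gaussianTailBound, ← mul_div_assoc, div_lt_one (by positivity)]
  nlinarith

lemma add_log_sub_two_le_log_div_gaussianTailBound {t Q : ℝ} (ht : 0 < t)
    (hQ : Real.exp (-2) / √(2 * π) ≤ Q) :
    t ^ 2 / 2 + Real.log t - 2 ≤ Real.log (Q / gaussianTailBound t) := by
  have hratio : t * Real.exp (t ^ 2 / 2 - 2)
      = Real.exp (-2) / √(2 * π) / gaussianTailBound t := by
    rw [gaussianTailBound]
    field_simp
    rw [← Real.exp_add]
    ring_nf
  calc t ^ 2 / 2 + Real.log t - 2 = Real.log (t * Real.exp (t ^ 2 / 2 - 2)) := by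
        rw [Real.log_mul ht.ne' (Real.exp_pos _).ne', Real.log_exp]
        ring
    _ ≤ _ := by
        rw [hratio]
        exact Real.log_le_log (by rw [← hratio]; positivity)
          (div_le_div_of_nonneg_right hQ (gaussianTailBound_pos ht).le)

lemma exp_neg_two_div_le_gaussianReal_Ici_one :
    Real.exp (-2) / √(2 * π) ≤ (gaussianReal 0 1 (Ici 1)).toReal := by
  have hIoc : Real.exp (-2) / √(2 * π) ≤ (gaussianReal 0 1 (Ioc 1 2)).toReal := by
    rw [gaussianReal_apply_eq_integral 0 one_ne_zero, ENNReal.toReal_ofReal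
      (setIntegral_nonneg measurableSet_Ioc fun x _ ↦ gaussianPDFReal_nonneg 0 1 x)]
    calc Real.exp (-2) / √(2 * π) = ∫ _ in Ioc (1 : ℝ) 2, Real.exp (-2) / √(2 * π) := by
          norm_num [Real.volume_Ioc]
      _ ≤ ∫ x in Ioc (1 : ℝ) 2, gaussianPDFReal 0 1 x := by
          refine setIntegral_mono_on (integrableOn_const (by simp))
            (integrable_gaussianPDFReal 0 1).integrableOn measurableSet_Ioc
            fun x ⟨hx1, hx2⟩ ↦ ?_
          rw [gaussianPDFReal_zero_one]
          gcongr
          nlinarith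
  exact hIoc.trans (ENNReal.toReal_mono (measure_ne_top _ _)
    (measure_mono (Ioc_subset_Ioi_self.trans Ioi_subset_Ici_self)))

lemma gaussianReal_sq_abs_ge_mul {s : ℝ} (hs : 0 < s) (c : ℝ) :
    gaussianReal 0 (s ^ 2).toNNReal {x | c * s ≤ |x|} = gaussianReal 0 1 {x | c ≤ |x|} := by
  have hmap := gaussianReal_map_const_mul (μ := 0) (v := 1) s
  rw [mul_zero, mul_one, ← Real.toNNReal_of_nonneg] at hmap
  rw [← hmap, Measure.map_apply (measurable_const_mul s)
    (isClosed_le continuous_const continuous_abs).measurableSet]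
  congr 1
  ext x
  simp [abs_mul, abs_of_pos hs, mul_comm c, hs]

lemma gaussianReal_abs_ge {c : ℝ} (hc : 0 < c) (v : ℝ≥0) :
    gaussianReal 0 v {x | c ≤ |x|} = 2 * gaussianReal 0 v (Ici c) := by
  have hsplit : {x : ℝ | c ≤ |x|} = (fun x ↦ -x) ⁻¹' Ici c ∪ Ici c := by
    ext x
    simp only [mem_ofPred_eq, mem_union, mem_preimage, mem_Ici, le_abs]
    tauto
  have hdisj : Disjoint ((fun x : ℝ ↦ -x) ⁻¹' Ici c) (Ici c) :=
    disjoint_left.2 fun x h h' ↦ by simp only [mem_preimage, mem_Ici] at h h'; linarith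
  have hsymm : gaussianReal 0 v ((fun x ↦ -x) ⁻¹' Ici c) = gaussianReal 0 v (Ici c) := by
    rw [← Measure.map_apply measurable_neg measurableSet_Ici, gaussianReal_map_neg, neg_zero]
  rw [hsplit, measure_union hdisj measurableSet_Ici, hsymm, two_mul]

lemma ofReal_mul_sq_sub_one_le_bre_gaussianReal_abs_ge {s t : ℝ} (hs : 0 < s)
    (ht : Real.exp (5 / 2) ≤ t) :
    ENNReal.ofReal ((gaussianReal 0 1 (Ici 1)).toReal * (t ^ 2 - 1)) ≤
      bre (gaussianReal 0 ((t * s) ^ 2).toNNReal {x | t * s ≤ |x|}).toReal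
        (gaussianReal 0 (s ^ 2).toNNReal {x | t * s ≤ |x|}).toReal := by
  set Q := (gaussianReal 0 1 (Ici 1)).toReal
  have ht1 : 1 < t := (Real.one_lt_exp_iff.2 (by norm_num)).trans_le ht
  have hp : (gaussianReal 0 ((t * s) ^ 2).toNNReal {x | t * s ≤ |x|}).toReal = 2 * Q := by
    rw [show {x : ℝ | t * s ≤ |x|} = {x | 1 * (t * s) ≤ |x|} by simp only [one_mul],
      gaussianReal_sq_abs_ge_mul (by positivity), gaussianReal_abs_ge one_pos,
      ENNReal.toReal_mul, ENNReal.toReal_ofNat]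
  have hq : (gaussianReal 0 (s ^ 2).toNNReal {x | t * s ≤ |x|}).toReal
      ≤ 2 * gaussianTailBound t := by
    rw [gaussianReal_sq_abs_ge_mul hs, gaussianReal_abs_ge (by positivity),
      ENNReal.toReal_mul, ENNReal.toReal_ofNat]
    exact mul_le_mul_of_nonneg_left
      (gaussianReal_Ici_toReal_le_gaussianTailBound (by positivity)) zero_le_two
  have hQ : Real.exp (-2) / √(2 * π) ≤ Q := exp_neg_two_div_le_gaussianReal_Ici_one
  have hQ0 : 0 < Q := (by positivity : (0 : ℝ) < _).trans_le hQ
  have hlog : (t ^ 2 + 1) / 2 ≤ Real.log (2 * Q / (2 * gaussianTailBound t)) := by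
    have hlogt : 5 / 2 ≤ Real.log t := (Real.le_log_iff_exp_le (by positivity)).2 ht
    rw [mul_div_mul_left _ _ two_ne_zero]
    linarith [add_log_sub_two_le_log_div_gaussianTailBound (t := t) (by positivity) hQ]
  have hp1 : (gaussianReal 0 ((t * s) ^ 2).toNNReal {x | t * s ≤ |x|}).toReal ≤ 1 :=
    ENNReal.toReal_le_of_le_ofReal zero_le_one (by simpa using prob_le_one)
  refine le_trans ?_ (ofReal_mul_log_div_sub_one_le_bre (hp ▸ by positivity) hp1
    ENNReal.toReal_nonneg hq (two_mul_gaussianTailBound_lt_one ht1))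
  rw [hp]
  apply ENNReal.ofReal_le_ofReal
  nlinarith

/-- Theorem 2, noncoherent case, lower bound: quantizing the real and imaginary parts of
the noncoherent channel output separately with one-bit quantizers achieves a capacity per
unit-energy of at least `2·Q(1)/σ²`, where `Q(1) = P(N(0,1) ≥ 1)`. Given input `x`, the two
output components are independent centered real Gaussians of variance `(|x|² + σ²)/2`. -/
theorem noncoherent_two_bit_lower_bound (σ : ℝ) (hσ : 0 < σ) :
    ENNReal.ofReal (2 * ((gaussianReal 0 1) {u : ℝ | 1 ≤ u}).toReal / σ ^ 2) ≤
      ⨆ (ξ : ℂ) (_ : ξ ≠ 0) (DR : Set ℝ) (_ : MeasurableSet DR) (DI : Set ℝ)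
        (_ : MeasurableSet DI),
        (bre ((gaussianReal 0 (((‖ξ‖ ^ 2 + σ ^ 2) / 2).toNNReal)) DR).toReal
            ((gaussianReal 0 ((σ ^ 2 / 2).toNNReal)) DR).toReal +
          bre ((gaussianReal 0 (((‖ξ‖ ^ 2 + σ ^ 2) / 2).toNNReal)) DI).toReal
            ((gaussianReal 0 ((σ ^ 2 / 2).toNNReal)) DI).toReal) /
          ENNReal.ofReal (‖ξ‖ ^ 2) := by
  set Q := ((gaussianReal 0 1) {u : ℝ | 1 ≤ u}).toReal
  set t := Real.exp (5 / 2)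
  set s := σ / √2
  set ξ : ℂ := ((σ * √(t ^ 2 - 1) : ℝ) : ℂ)
  set D := {x : ℝ | t * s ≤ |x|}
  have ht2 : 0 < t ^ 2 - 1 := by nlinarith [Real.one_lt_exp_iff.2 (by norm_num : (0 : ℝ) < 5 / 2)]
  have hξ : ‖ξ‖ ^ 2 = σ ^ 2 * (t ^ 2 - 1) := by
    rw [Complex.norm_real, Real.norm_eq_abs, sq_abs, mul_pow, Real.sq_sqrt ht2.le]
  have hξ0 : ξ ≠ 0 :=
    norm_ne_zero_iff.1 fun h ↦ by rw [h] at hξ; nlinarith [mul_pos (pow_pos hσ 2) ht2]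
  have hD : MeasurableSet D := (isClosed_le continuous_const continuous_abs).measurableSet
  have hvar₀ : σ ^ 2 / 2 = s ^ 2 := by rw [div_pow, Real.sq_sqrt zero_le_two]
  have hvar₁ : (‖ξ‖ ^ 2 + σ ^ 2) / 2 = (t * s) ^ 2 := by rw [hξ, mul_pow, ← hvar₀]; ring
  have hbit := ofReal_mul_sq_sub_one_le_bre_gaussianReal_abs_ge (by positivity : 0 < s) le_rfl
  rw [← hvar₀, ← hvar₁] at hbit
  refine le_iSup₂_of_le ξ hξ0 (le_iSup₂_of_le D hD (le_iSup₂_of_le D hD ?_))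
  have hQ : 0 ≤ Q * (t ^ 2 - 1) := mul_nonneg ENNReal.toReal_nonneg ht2.le
  calc ENNReal.ofReal (2 * Q / σ ^ 2)
      = (ENNReal.ofReal (Q * (t ^ 2 - 1)) + ENNReal.ofReal (Q * (t ^ 2 - 1))) /
          ENNReal.ofReal (‖ξ‖ ^ 2) := by
        rw [hξ, ← ENNReal.ofReal_add hQ hQ, ← ENNReal.ofReal_div_of_pos (by positivity)]
        congr 1
        field_simp
        ring
    _ ≤ _ := by gcongr <;> exact hbit
end
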